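/- arXiv:1110.4896 — 2 statements merged into one kernel-verified Lean document; each statement's English description precedes it below -/
import Mathlib

section
/- Let D be a connected digraph without digons and let Δ̃ = Δ̃(D). If Δ̃ > 1, then the list chromatic number satisfies χ_l(D) ≤ ⌈Δ̃⌉. -/
/-!
Let `k = ⌈Δ̃⌉ ≥ 2`. Every vertex has `d⁺ d⁻ ≤ k²`, so `min (d⁺, d⁻) ≤ k`, with equality only if
`d⁺ = d⁻ = k`. Colour greedily along a ranking, giving each vertex a colour not shared by an
earlier out-neighbour and an earlier in-neighbour: the top vertex of a monochromatic directed cycle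
would violate this. A vertex with a later neighbour then faces at most `k - 1` colours on one side.
If some vertex has `min (d⁺, d⁻) < k`, rank the others by decreasing distance to it. Otherwise `D`
is `k`-diregular, and the last vertex `a` gets a spare colour from a neighbour `u` precoloured
outside `L a`, or from two same-side neighbours `u₁, u₂` precoloured alike, as long as `D - u`,
resp. `D - u₁ - u₂`, stays connected. Such a configuration exists: else the lists are constant
along a leaf block, and a smallest piece cut off by two of its vertices yields a non-separating
same-side pair, because without digons each side of a vertex meets the piece at most once, which
forces `k = 2`.
-/

/-- A set `A` of vertices of a digraph (given by its arc relation `Adj`) is *acyclic*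
if the subdigraph induced on `A` contains no directed cycle; equivalently, no vertex of `A`
lies on a closed directed walk all of whose vertices are in `A`. -/
def AcyclicSet {V : Type*} (Adj : V → V → Prop) (A : Set V) : Prop :=
  ∀ v ∈ A, ¬ Relation.TransGen (fun x y => x ∈ A ∧ y ∈ A ∧ Adj x y) v v

/-- A digraph is `k`-colorable if its vertex set can be partitioned into `k` acyclic sets. -/
def DiColorable {V : Type*} (Adj : V → V → Prop) (k : ℕ) : Prop :=
  ∃ f : V → Fin k, ∀ i : Fin k, AcyclicSet Adj {v | f v = i}

/-- The chromatic number of a digraph: the least `k` admitting a partition of the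
vertex set into `k` acyclic sets. -/
noncomputable def dichromNum {V : Type*} (Adj : V → V → Prop) : ℕ :=
  sInf {k | DiColorable Adj k}

/-- A digraph is digon-free if it has no directed cycle of length two. -/
def DigonFree {V : Type*} (Adj : V → V → Prop) : Prop :=
  ∀ u v, Adj u v → ¬ Adj v u

/-- The out-degree of a vertex. -/
noncomputable def outDeg {V : Type*} (Adj : V → V → Prop) (v : V) : ℕ :=
  Nat.card {u // Adj v u}

/-- The in-degree of a vertex. -/
noncomputable def inDeg {V : Type*} (Adj : V → V → Prop) (v : V) : ℕ :=
  Nat.card {u // Adj u v}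

/-- `Δ̃(D)`: the maximum geometric mean of the out-degree and in-degree of a vertex. -/
noncomputable def tildeDelta {V : Type*} [Fintype V] (Adj : V → V → Prop) : ℝ :=
  ⨆ v : V, Real.sqrt ((outDeg Adj v : ℝ) * (inDeg Adj v : ℝ))

/-- The underlying undirected graph of a digraph. -/
def underGraph {V : Type*} (Adj : V → V → Prop) : SimpleGraph V where
  Adj a b := a ≠ b ∧ (Adj a b ∨ Adj b a)
  symm := ⟨fun _ _ h => ⟨h.1.symm, h.2.symm⟩⟩
  loopless := ⟨fun _ h => h.1 rfl⟩

/-- `D` is `L`-colorable for a list assignment `L`: each vertex can be given a color from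
its list so that every color class is acyclic. -/
def LColorable {V : Type*} (Adj : V → V → Prop) (L : V → Finset ℕ) : Prop :=
  ∃ c : V → ℕ, (∀ v, c v ∈ L v) ∧ ∀ j : ℕ, AcyclicSet Adj {v | c v = j}

/-- `D` is `k`-choosable: `L`-colorable for every list assignment with lists of size `≥ k`. -/
def Choosable {V : Type*} (Adj : V → V → Prop) (k : ℕ) : Prop :=
  ∀ L : V → Finset ℕ, (∀ v, k ≤ (L v).card) → LColorable Adj L

/-- The list chromatic number (choice number) of a digraph. -/
noncomputable def listChromNum {V : Type*} (Adj : V → V → Prop) : ℕ :=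
  sInf {k | Choosable Adj k}

theorem Finset.card_image_inter_lt_of_card_lt {α β : Type*} [DecidableEq β] {s : Finset α}
    {t : Finset β} (f : α → β) (h : s.card < t.card) : (s.image f ∩ t).card < t.card :=
  (Finset.card_le_card Finset.inter_subset_left).trans_lt (Finset.card_image_le.trans_lt h)

theorem Finset.card_image_inter_lt_of_subset_erase {α β : Type*} [DecidableEq α] [DecidableEq β]
    {s : Finset α} {t : Finset β} {f : α → β} {x : α} (hx : x ∈ s) (hst : s.card ≤ t.card)
    (h : s.image f ∩ t ⊆ (s.erase x).image f) : (s.image f ∩ t).card < t.card :=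
  (Finset.card_le_card h).trans_lt
    (Finset.card_image_le.trans_lt ((Finset.card_erase_lt_of_mem hx).trans_le hst))

theorem Finset.image_inter_subset_image_erase {α β : Type*} [DecidableEq α] [DecidableEq β]
    {s : Finset α} {t : Finset β} {f : α → β} {x : α} (hx : f x ∉ t) :
    s.image f ∩ t ⊆ (s.erase x).image f := by
  intro γ hγ
  obtain ⟨hγs, hγt⟩ := Finset.mem_inter.1 hγ
  obtain ⟨y, hy, rfl⟩ := Finset.mem_image.1 hγs
  exact Finset.mem_image_of_mem f (Finset.mem_erase.2 ⟨by rintro rfl; exact hx hγt, hy⟩)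

theorem Finset.image_subset_image_erase {α β : Type*} [DecidableEq α] [DecidableEq β]
    {s : Finset α} {f : α → β} {x y : α} (hy : y ∈ s) (hyx : y ≠ x) (h : f y = f x) :
    s.image f ⊆ (s.erase x).image f := by
  intro γ hγ
  obtain ⟨z, hz, rfl⟩ := Finset.mem_image.1 hγ
  by_cases hzx : z = x
  · exact Finset.mem_image.2 ⟨y, Finset.mem_erase.2 ⟨hyx, hy⟩, hzx ▸ h⟩
  · exact Finset.mem_image_of_mem f (Finset.mem_erase.2 ⟨hzx, hz⟩)

namespace SimpleGraph

variable {V : Type*} (G : SimpleGraph V)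

/-- A spanning version of `G.induce U`: its reachability relation is reachability inside `U`. -/
def restrict (U : Set V) : SimpleGraph V where
  Adj x y := x ∈ U ∧ y ∈ U ∧ G.Adj x y
  symm := ⟨fun _ _ h => ⟨h.2.1, h.1, h.2.2.symm⟩⟩
  loopless := ⟨fun _ h => G.loopless.irrefl _ h.2.2⟩

def ConnectedOn (U : Set V) : Prop :=
  ∀ x ∈ U, ∀ y ∈ U, (G.restrict U).Reachable x y

/-- `A` is a connected component of `G - S`. -/
structure IsFragment (A S : Set V) : Prop where
  nonempty : A.Nonempty
  disjoint : Disjoint A S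
  connectedOn : G.ConnectedOn A
  adj_mem : ∀ x ∈ A, ∀ y, G.Adj x y → y ∈ A ∪ S

variable {G}

theorem restrict_mono {U W : Set V} (h : U ⊆ W) : G.restrict U ≤ G.restrict W :=
  fun _ _ hxy => ⟨h hxy.1, h hxy.2.1, hxy.2.2⟩

theorem le_restrict_univ : G ≤ G.restrict Set.univ :=
  fun _ _ h => ⟨trivial, trivial, h⟩

theorem Reachable.mem_of_restrict {U : Set V} {x y : V} (h : (G.restrict U).Reachable x y)
    (hx : x ∈ U) : y ∈ U := by
  induction (reachable_iff_reflTransGen x y).1 h with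
  | refl => exact hx
  | tail _ hyz => exact hyz.2.1

theorem ConnectedOn.mono_restrict {U W : Set V} (hU : G.ConnectedOn U) (h : U ⊆ W) {x y : V}
    (hx : x ∈ U) (hy : y ∈ U) : (G.restrict W).Reachable x y :=
  (hU x hx y hy).mono (restrict_mono h)

theorem connectedOn_of_forall_reachable {U : Set V} {z : V}
    (h : ∀ x ∈ U, (G.restrict U).Reachable x z) : G.ConnectedOn U :=
  fun x hx y hy => (h x hx).trans (h y hy).symm

theorem Connected.connectedOn_univ (h : G.Connected) : G.ConnectedOn Set.univ :=
  fun x _ y _ => (h.preconnected x y).mono le_restrict_univ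

theorem ConnectedOn.union {U W : Set V} (hU : G.ConnectedOn U) (hW : G.ConnectedOn W) {z : V}
    (hzU : z ∈ U) (hzW : z ∈ W) : G.ConnectedOn (U ∪ W) := by
  refine connectedOn_of_forall_reachable (z := z) fun x hx => ?_
  rcases hx with hx | hx
  · exact hU.mono_restrict Set.subset_union_left hx hzU
  · exact hW.mono_restrict Set.subset_union_right hx hzW

theorem ConnectedOn.eq_of_adj {U : Set V} (hU : G.ConnectedOn U) {β : Type*} {f : V → β}
    (hf : ∀ x ∈ U, ∀ y ∈ U, G.Adj x y → f x = f y) {x y : V} (hx : x ∈ U) (hy : y ∈ U) :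
    f x = f y := by
  have h := (reachable_iff_reflTransGen x y).1 (hU x hx y hy)
  clear hy
  induction h with
  | refl => rfl
  | tail _ hst ih => exact ih.trans (hf _ hst.1 _ hst.2.1 hst.2.2)

theorem connectedOn_setOf_reachable (U : Set V) (w : V) :
    G.ConnectedOn {t | (G.restrict U).Reachable w t} := by
  set C := {t | (G.restrict U).Reachable w t}
  have hC : ∀ t ∈ C, (G.restrict C).Reachable w t := by
    intro t ht
    induction (reachable_iff_reflTransGen w t).1 ht with
    | refl => rfl
    | @tail s t hws hst ih =>
      have hs : (G.restrict U).Reachable w s := (reachable_iff_reflTransGen w s).2 hws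
      exact (ih hs).trans (Adj.reachable ⟨hs, hs.trans hst.reachable, hst.2.2⟩)
  exact fun x hx y hy => (hC x hx).symm.trans (hC y hy)

theorem Reachable.exists_boundary {U A S : Set V} (hA : ∀ x ∈ A, ∀ y, G.Adj x y → y ∈ A ∪ S)
    {w α : V} (h : (G.restrict U).Reachable w α) (hwA : w ∉ A) (hα : α ∈ A) :
    ∃ s ∈ S, (G.restrict (U \ A)).Reachable w s := by
  suffices key : ∀ t, Relation.ReflTransGen (G.restrict U).Adj w t →
      (∃ s ∈ S, (G.restrict (U \ A)).Reachable w s) ∨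
        (t ∉ A ∧ (G.restrict (U \ A)).Reachable w t) by
    rcases key α ((reachable_iff_reflTransGen w α).1 h) with h | h
    · exact h
    · exact absurd hα h.1
  intro t ht
  induction ht with
  | refl => exact .inr ⟨hwA, .rfl⟩
  | @tail s t _ hst ih =>
    rcases ih with ih | ⟨hsA, hws⟩
    · exact .inl ih
    by_cases htA : t ∈ A
    · have hs := hA t htA s hst.2.2.symm
      exact .inl ⟨s, hs.resolve_left hsA, hws⟩
    · exact .inr ⟨htA, hws.trans (Adj.reachable ⟨⟨hst.1, hsA⟩, ⟨hst.2.1, htA⟩, hst.2.2⟩)⟩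

theorem isFragment_setOf_reachable {S : Set V} {w : V} (hw : w ∉ S) :
    G.IsFragment {t | (G.restrict Sᶜ).Reachable w t} S where
  nonempty := ⟨w, .rfl⟩
  disjoint := Set.disjoint_left.2 fun _ ht => ht.mem_of_restrict hw
  connectedOn := connectedOn_setOf_reachable _ _
  adj_mem x hx y hxy := by
    by_cases hy : y ∈ S
    · exact .inr hy
    · exact .inl (hx.trans (Adj.reachable ⟨hx.mem_of_restrict hw, hy, hxy⟩))

theorem exists_isFragment_subset {S A : Set V} (hS : ¬ G.ConnectedOn Sᶜ) (hSA : S ⊆ A)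
    (hA : G.ConnectedOn Aᶜ) : ∃ A' ⊆ A, G.IsFragment A' S := by
  simp only [ConnectedOn, not_forall] at hS
  obtain ⟨x, hx, y, hy, hxy⟩ := hS
  have hAS : Aᶜ ⊆ Sᶜ := Set.compl_subset_compl.2 hSA
  obtain ⟨w, hw, hwA⟩ : ∃ w ∈ Sᶜ, ∀ z ∈ Aᶜ, ¬ (G.restrict Sᶜ).Reachable w z := by
    rcases Set.eq_empty_or_nonempty Aᶜ with h | ⟨z, hz⟩
    · exact ⟨x, hx, by simp [h]⟩
    have hreach : ∀ t ∈ Aᶜ, (G.restrict Sᶜ).Reachable t z :=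
      fun t ht => hA.mono_restrict hAS ht hz
    by_contra! hall
    obtain ⟨zx, hzx, hx'⟩ := hall x hx
    obtain ⟨zy, hzy, hy'⟩ := hall y hy
    exact hxy ((hx'.trans (hreach zx hzx)).trans (hy'.trans (hreach zy hzy)).symm)
  refine ⟨_, fun t ht => ?_, isFragment_setOf_reachable hw⟩
  by_contra htA
  exact hwA t htA ht

theorem IsFragment.ncard_lt [Finite V] {A' A S : Set V} (hA' : G.IsFragment A' S) (h : A' ⊆ A)
    {s : V} (hsS : s ∈ S) (hsA : s ∈ A) : A'.ncard < A.ncard :=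
  Set.ncard_lt_ncard (Set.ssubset_iff_subset_ne.2 ⟨h, fun he =>
    Set.disjoint_left.1 hA'.disjoint (he ▸ hsA) hsS⟩) (Set.toFinite A)

theorem connectedOn_singleton (z : V) : G.ConnectedOn {z} := by
  rintro x rfl y rfl
  rfl

/-- `A` is a leaf block minus its cut vertex `z` (or `G - z` if `G` has no cut vertex): a smallest
component of `G - z` over all cut vertices `z`. -/
theorem Connected.exists_isFragment_nonseparating [Finite V] [Nontrivial V] (hG : G.Connected) :
    ∃ A z, G.IsFragment A {z} ∧ G.ConnectedOn Aᶜ ∧ ∀ v ∈ A, G.ConnectedOn {v}ᶜ := by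
  by_cases hcut : ∀ v, G.ConnectedOn {v}ᶜ
  · obtain ⟨z⟩ := hG.nonempty
    obtain ⟨w, hw⟩ := exists_ne z
    refine ⟨{z}ᶜ, z, ⟨⟨w, hw⟩, disjoint_compl_left, hcut z, fun _ _ y _ => ?_⟩, ?_,
      fun v _ => hcut v⟩
    · exact (em (y = z)).symm.imp id id
    · rw [compl_compl]
      exact connectedOn_singleton z
  push Not at hcut
  obtain ⟨z₀, hz₀⟩ := hcut
  set F := {A : Set V | ∃ z, G.IsFragment A {z}}
  have hF : F.Nonempty := by
    obtain ⟨A, -, hA⟩ := exists_isFragment_subset hz₀ (Set.subset_univ _)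
      (by simp [ConnectedOn])
    exact ⟨A, z₀, hA⟩
  obtain ⟨A, ⟨z, hA⟩, hmin⟩ := Set.exists_min_image F Set.ncard (Set.toFinite F) hF
  have hAc : G.ConnectedOn Aᶜ := by
    refine connectedOn_of_forall_reachable (z := z) fun x hx => ?_
    obtain ⟨α, hα⟩ := hA.nonempty
    obtain ⟨s, rfl, hs⟩ := ((hG.preconnected x α).mono le_restrict_univ).exists_boundary
      hA.adj_mem hx hα
    exact hs.mono (restrict_mono fun t ht => ht.2)
  refine ⟨A, z, hA, hAc, fun v hv => ?_⟩
  by_contra hv'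
  obtain ⟨A', hA'A, hA'⟩ := exists_isFragment_subset hv' (Set.singleton_subset_iff.2 hv) hAc
  exact (hA'.ncard_lt hA'A rfl hv).not_ge (hmin A' ⟨v, hA'⟩)

theorem Reachable.exists_adj_dist_lt {v a : V} (h : G.Reachable v a) (hne : v ≠ a) :
    ∃ w, G.Adj v w ∧ G.dist w a < G.dist v a := by
  obtain ⟨p, hp⟩ := h.exists_walk_length_eq_dist
  cases p with
  | nil => exact absurd rfl hne
  | cons hvw q =>
    refine ⟨_, hvw, ?_⟩
    have := dist_le q
    rw [Walk.length_cons] at hp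
    omega

/-- Vertices outside `U` first, then those of `U` by decreasing distance to `a` inside `U`,
ties broken by an enumeration of `V`. -/
theorem exists_rank_toward [Fintype V] {U : Set V} {a : V} (ha : a ∈ U) (hU : G.ConnectedOn U) :
    ∃ r : V → ℕ, Function.Injective r ∧ (∀ p ∉ U, ∀ v ∈ U, r p < r v) ∧
      ∀ v ∈ U, v ≠ a → ∃ w, G.Adj v w ∧ r v < r w := by
  classical
  set d := fun v => (G.restrict U).dist v a
  set e := Fintype.equivFin V
  set N := Fintype.card V
  set M := Finset.univ.sup d
  have he : ∀ v, (e v : ℕ) < N := fun v => (e v).2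
  have hdM : ∀ v, d v ≤ M := fun v => Finset.le_sup (Finset.mem_univ v)
  refine ⟨fun v => e v + N * (if v ∈ U then M + 1 - d v else 0), fun x y hxy => ?_,
    fun p hp v hv => ?_, fun v hv hva => ?_⟩
  · have h := congrArg (· % N) hxy
    simp only [Nat.add_mul_mod_self_left, Nat.mod_eq_of_lt (he _)] at h
    exact e.injective (Fin.ext h)
  · simp only [hp, hv, if_false, if_true, mul_zero, add_zero]
    have := he p
    have : 1 ≤ M + 1 - d v := by have := hdM v; omega
    nlinarith
  · obtain ⟨w, hvw, hdw⟩ := (hU v hv a ha).exists_adj_dist_lt hva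
    have hdw' : d w < d v := hdw
    have := hdM v
    refine ⟨w, hvw.2.2, ?_⟩
    simp only [hv, hvw.2.1, if_true]
    have : M + 1 - d v + 1 ≤ M + 1 - d w := by omega
    have := he v
    nlinarith

variable {A : Set V} {p q : V}

/-- From outside `A`, the only way into `A` avoiding `p` is through `q`. -/
theorem IsFragment.connectedOn_compl_diff (hA : G.IsFragment A {p, q})
    (hp : G.ConnectedOn {p}ᶜ) : G.ConnectedOn (Aᶜ \ {p}) := by
  obtain ⟨α, hα⟩ := hA.nonempty
  have hαp : α ≠ p := fun h => Set.disjoint_left.1 hA.disjoint hα (h ▸ Set.mem_insert _ _)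
  refine connectedOn_of_forall_reachable (z := q) fun w hw => ?_
  obtain ⟨s, hs, hws⟩ := (hp w hw.2 α hαp).exists_boundary hA.adj_mem hw.1 hα
  have hs' : s ∈ {p}ᶜ \ A := hws.mem_of_restrict ⟨hw.2, hw.1⟩
  obtain rfl : s = q := hs.resolve_left hs'.1
  exact hws.mono (restrict_mono fun t ht => ⟨ht.2, ht.1⟩)

theorem IsFragment.connectedOn_compl (hA : G.IsFragment A {p, q}) (hp : G.ConnectedOn {p}ᶜ)
    (hq : G.ConnectedOn {q}ᶜ) (hpq : p ≠ q) {z : V} (hzA : z ∉ A) (hzp : z ≠ p) (hzq : z ≠ q) :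
    G.ConnectedOn Aᶜ := by
  have hA' : G.IsFragment A {q, p} := Set.pair_comm p q ▸ hA
  have h := (hA.connectedOn_compl_diff hp).union (hA'.connectedOn_compl_diff hq)
    (z := z) ⟨hzA, hzp⟩ ⟨hzA, hzq⟩
  rwa [← Set.sdiff_inter, Set.singleton_inter_eq_empty.2 (Set.mem_singleton_iff.not.2 hpq),
    Set.sdiff_empty] at h

theorem IsFragment.connectedOn_compl_pair (hA : G.IsFragment A {p, q}) (hpq : p ≠ q)
    (hAp : G.ConnectedOn (Aᶜ \ {p})) {α : V} (hα : α ∈ A) (hq : ∀ x ∈ A, G.Adj x q) :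
    G.ConnectedOn {α, p}ᶜ := by
  have hqA : q ∉ A := fun h => Set.disjoint_left.1 hA.disjoint h (by simp)
  have hsub : Aᶜ \ {p} ⊆ {α, p}ᶜ := by
    rintro t ⟨htA, htp⟩ (rfl | rfl)
    exacts [htA hα, htp rfl]
  refine connectedOn_of_forall_reachable (z := q) fun w hw => ?_
  by_cases hwA : w ∈ A
  · exact Adj.reachable ⟨hw, hsub ⟨hqA, hpq.symm⟩, hq w hwA⟩
  · exact hAp.mono_restrict hsub ⟨hwA, fun h => hw (.inr h)⟩ ⟨hqA, hpq.symm⟩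

end SimpleGraph

section Neighbourhoods

variable {V : Type*} [Fintype V]

open Classical in
noncomputable def outNbrs (Adj : V → V → Prop) (v : V) : Finset V :=
  Finset.univ.filter (Adj v)

open Classical in
noncomputable def inNbrs (Adj : V → V → Prop) (v : V) : Finset V :=
  Finset.univ.filter (Adj · v)

variable {Adj : V → V → Prop}

@[simp]
theorem mem_outNbrs {v u : V} : u ∈ outNbrs Adj v ↔ Adj v u := by
  classical simp [outNbrs]

@[simp]
theorem mem_inNbrs {v u : V} : u ∈ inNbrs Adj v ↔ Adj u v := by
  classical simp [inNbrs]

theorem card_outNbrs (v : V) : (outNbrs Adj v).card = outDeg Adj v := by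
  classical
  rw [outDeg, Nat.card_eq_fintype_card, Fintype.card_subtype, outNbrs]

theorem card_inNbrs (v : V) : (inNbrs Adj v).card = inDeg Adj v := by
  classical
  rw [inDeg, Nat.card_eq_fintype_card, Fintype.card_subtype, inNbrs]

theorem outDeg_mul_inDeg_le (Adj : V → V → Prop) (v : V) :
    outDeg Adj v * inDeg Adj v ≤ ⌈tildeDelta Adj⌉₊ * ⌈tildeDelta Adj⌉₊ := by
  have h : √((outDeg Adj v : ℝ) * inDeg Adj v) ≤ ⌈tildeDelta Adj⌉₊ :=
    (le_ciSup (f := fun v => √((outDeg Adj v : ℝ) * inDeg Adj v)) (Set.finite_range _).bddAbove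
      v).trans (Nat.le_ceil _)
  rw [Real.sqrt_le_left (by positivity), sq] at h
  exact_mod_cast h

end Neighbourhoods

theorem eq_of_mul_le_mul_self {a b k : ℕ} (hk : 0 < k) (h : a * b ≤ k * k) (ha : k ≤ a)
    (hb : k ≤ b) : a = k ∧ b = k := by
  constructor <;> nlinarith

def SameSide {V : Type*} (Adj : V → V → Prop) (a x y : V) : Prop :=
  (Adj a x ∧ Adj a y) ∨ (Adj x a ∧ Adj y a)

theorem exists_sameSide_ne {V : Type*} [Fintype V] {Adj : V → V → Prop} (hdig : DigonFree Adj)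
    {k : ℕ} (hk : 2 ≤ k) {a : V} (ha : outDeg Adj a = k ∧ inDeg Adj a = k) (z : V) :
    ∃ x y, x ≠ y ∧ SameSide Adj a x y ∧ x ≠ z ∧ y ≠ z := by
  by_cases hz : Adj a z
  · obtain ⟨x, hx, y, hy, hxy⟩ := Finset.one_lt_card.1 (by rw [card_inNbrs]; omega :
      1 < (inNbrs Adj a).card)
    rw [mem_inNbrs] at hx hy
    exact ⟨x, y, hxy, .inr ⟨hx, hy⟩, by rintro rfl; exact hdig _ _ hz hx,
      by rintro rfl; exact hdig _ _ hz hy⟩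
  · obtain ⟨x, hx, y, hy, hxy⟩ := Finset.one_lt_card.1 (by rw [card_outNbrs]; omega :
      1 < (outNbrs Adj a).card)
    rw [mem_outNbrs] at hx hy
    exact ⟨x, y, hxy, .inl ⟨hx, hy⟩, by rintro rfl; exact hz hx, by rintro rfl; exact hz hy⟩

theorem LColorable.mono {V : Type*} {Adj : V → V → Prop} {L L' : V → Finset ℕ}
    (hL : ∀ v, L' v ⊆ L v) (h : LColorable Adj L') : LColorable Adj L :=
  let ⟨c, hc, hacyc⟩ := h
  ⟨c, fun v => hL v (hc v), hacyc⟩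

section Greedy

variable {V : Type*} {Adj : V → V → Prop} {L : V → Finset ℕ} {r : V → ℕ}

/-- Whatever the colouring of the vertices ranked below `v`, some colour of `L v` closes no
monochromatic directed cycle on which `v` has the top rank. -/
def Extendable (Adj : V → V → Prop) (L : V → Finset ℕ) (r : V → ℕ) (v : V) : Prop :=
  ∀ c : V → ℕ, (∀ u, r u < r v → c u ∈ L u) →
    ∃ γ ∈ L v, ∀ x y, r x < r v → r y < r v → Adj v x → Adj y v → c x = γ → c y ≠ γ

theorem extendable_of_out {v : V} {s : Finset V} (hs : ∀ x, r x < r v → Adj v x → x ∈ s)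
    (h : ∀ c : V → ℕ, (∀ u, r u < r v → c u ∈ L u) → (s.image c ∩ L v).card < (L v).card) :
    Extendable Adj L r v := fun c hc => by
  obtain ⟨γ, hγ, hγs⟩ := Finset.exists_mem_notMem_of_card_lt_card (h c hc)
  exact ⟨γ, hγ, fun x _ hx _ hvx _ hcx _ =>
    hγs (Finset.mem_inter.2 ⟨Finset.mem_image.2 ⟨x, hs x hx hvx, hcx⟩, hγ⟩)⟩

theorem extendable_of_in {v : V} {s : Finset V} (hs : ∀ y, r y < r v → Adj y v → y ∈ s)
    (h : ∀ c : V → ℕ, (∀ u, r u < r v → c u ∈ L u) → (s.image c ∩ L v).card < (L v).card) :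
    Extendable Adj L r v := fun c hc => by
  obtain ⟨γ, hγ, hγs⟩ := Finset.exists_mem_notMem_of_card_lt_card (h c hc)
  exact ⟨γ, hγ, fun _ y _ hy _ hyv _ hcy =>
    hγs (Finset.mem_inter.2 ⟨Finset.mem_image.2 ⟨y, hs y hy hyv, hcy⟩, hγ⟩)⟩

theorem extendable_of_subsingleton {v : V} (hdig : DigonFree Adj) {γ : ℕ} (hγ : γ ∈ L v)
    (h : ∀ x y, r x < r v → r y < r v → x = y) : Extendable Adj L r v := fun _ _ =>
  ⟨γ, hγ, fun x y hx hy hvx hyv _ _ => hdig v x hvx (by rw [h x y hx hy]; exact hyv)⟩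

theorem acyclicSet_of_forall_ne [Finite V] (hloop : ∀ v, ¬ Adj v v)
    (hr : Function.Injective r) {c : V → ℕ}
    (hc : ∀ v x y, r x < r v → r y < r v → Adj v x → Adj y v → c x = c v → c y ≠ c v) (j : ℕ) :
    AcyclicSet Adj {v | c v = j} := by
  intro v₀ _ hv₀
  set R := fun x y => x ∈ {v | c v = j} ∧ y ∈ {v | c v = j} ∧ Adj x y
  obtain ⟨z, hz, hmax⟩ := Set.exists_max_image {z | Relation.TransGen R z z} r
    (Set.toFinite _) ⟨v₀, hv₀⟩
  obtain ⟨x, hzx, hxz⟩ := Relation.TransGen.head'_iff.1 hz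
  obtain ⟨y, hzy, hyz⟩ := Relation.TransGen.tail'_iff.1 hz
  have hlt : ∀ t, Relation.TransGen R t t → t ≠ z → r t < r z := fun t ht htz =>
    (hmax t ht).lt_of_ne fun h => htz (hr h)
  have hx := hlt x (Relation.TransGen.tail' hxz hzx) fun h => hloop z (h ▸ hzx.2.2)
  have hy := hlt y (Relation.TransGen.head' hyz hzy) fun h => hloop z (h ▸ hyz.2.2)
  exact hc z x y hx hy hzx.2.2 hyz.2.2 (hzx.2.1.trans hzx.1.symm) (hyz.1.trans hyz.2.1.symm)

theorem lColorable_of_extendable [Finite V] (hloop : ∀ v, ¬ Adj v v)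
    (hr : Function.Injective r) (h : ∀ v, Extendable Adj L r v) :
    LColorable Adj L := by
  set Good := fun (c : V → ℕ) v => c v ∈ L v ∧
    ∀ x y, r x < r v → r y < r v → Adj v x → Adj y v → c x = c v → c y ≠ c v
  have key : ∀ n, ∃ c, ∀ v, r v < n → Good c v := by
    intro n
    induction n with
    | zero => exact ⟨fun _ => 0, fun v hv => absurd hv (Nat.not_lt_zero _)⟩
    | succ n ih =>
      obtain ⟨c, hc⟩ := ih
      have hext : ∀ v, r v = n → ∃ γ ∈ L v, ∀ x y, r x < r v → r y < r v → Adj v x →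
          Adj y v → c x = γ → c y ≠ γ :=
        fun v hv => h v c fun u hu => (hc u (hv ▸ hu)).1
      choose! g hgL hg using hext
      set c' := fun v => if r v = n then g v else c v
      have hc' : ∀ u, r u < n → c' u = c u := fun u hu => if_neg hu.ne
      refine ⟨c', fun v hv => ?_⟩
      have hbelow : ∀ u, r u < r v → c' u = c u := fun u hu => hc' u (by omega)
      have hv' : c' v = if r v = n then g v else c v := rfl
      by_cases hvn : r v = n
      · rw [if_pos hvn] at hv'
        refine ⟨hv' ▸ hgL v hvn, fun x y hx hy hvx hyv => ?_⟩
        rw [hbelow x hx, hbelow y hy, hv']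
        exact hg v hvn x y hx hy hvx hyv
      · rw [if_neg hvn] at hv'
        obtain ⟨h1, h2⟩ := hc v (by omega)
        refine ⟨hv' ▸ h1, fun x y hx hy hvx hyv => ?_⟩
        rw [hbelow x hx, hbelow y hy, hv']
        exact h2 x y hx hy hvx hyv
  obtain ⟨M, hM⟩ := (Set.finite_range r).bddAbove
  obtain ⟨c, hc⟩ := key (M + 1)
  have hgood : ∀ v, Good c v := fun v => hc v (Nat.lt_succ_of_le (hM ⟨v, rfl⟩))
  exact ⟨c, fun v => (hgood v).1, acyclicSet_of_forall_ne hloop hr fun v => (hgood v).2⟩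

end Greedy

section Extendable

variable {V : Type*} [Fintype V] {Adj : V → V → Prop} {L : V → Finset ℕ} {r : V → ℕ} {v : V}

theorem extendable_of_outDeg_lt (h : outDeg Adj v < (L v).card) : Extendable Adj L r v :=
  extendable_of_out (s := outNbrs Adj v) (fun _ _ hx => mem_outNbrs.2 hx) fun c _ =>
    Finset.card_image_inter_lt_of_card_lt c (by rwa [card_outNbrs])

theorem extendable_of_inDeg_lt (h : inDeg Adj v < (L v).card) : Extendable Adj L r v :=
  extendable_of_in (s := inNbrs Adj v) (fun _ _ hy => mem_inNbrs.2 hy) fun c _ =>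
    Finset.card_image_inter_lt_of_card_lt c (by rwa [card_inNbrs])

theorem extendable_of_adj_of_lt (hout : outDeg Adj v ≤ (L v).card)
    (hin : inDeg Adj v ≤ (L v).card) {w : V} (hvw : (underGraph Adj).Adj v w) (hr : r v < r w) :
    Extendable Adj L r v := by
  classical
  have hw : ∀ x, r x < r v → x ≠ w := by rintro x hx rfl; omega
  rcases hvw.2 with h | h
  · have := Finset.card_erase_lt_of_mem (mem_outNbrs.2 h)
    rw [card_outNbrs] at this
    exact extendable_of_out (s := (outNbrs Adj v).erase w)
      (fun x hx hvx => Finset.mem_erase.2 ⟨hw x hx, mem_outNbrs.2 hvx⟩)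
      fun c _ => Finset.card_image_inter_lt_of_card_lt c (by omega)
  · have := Finset.card_erase_lt_of_mem (mem_inNbrs.2 h)
    rw [card_inNbrs] at this
    exact extendable_of_in (s := (inNbrs Adj v).erase w)
      (fun y hy hyv => Finset.mem_erase.2 ⟨hw y hy, mem_inNbrs.2 hyv⟩)
      fun c _ => Finset.card_image_inter_lt_of_card_lt c (by omega)

theorem extendable_of_adj_notMem (hout : outDeg Adj v ≤ (L v).card)
    (hin : inDeg Adj v ≤ (L v).card) {u : V} (hvu : (underGraph Adj).Adj v u)
    (hu : ∀ c : V → ℕ, (∀ w, r w < r v → c w ∈ L w) → c u ∉ L v) : Extendable Adj L r v := by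
  classical
  rcases hvu.2 with h | h
  · exact extendable_of_out (s := outNbrs Adj v) (fun _ _ hx => mem_outNbrs.2 hx) fun c hc =>
      Finset.card_image_inter_lt_of_subset_erase (mem_outNbrs.2 h) (by rwa [card_outNbrs])
        (Finset.image_inter_subset_image_erase (hu c hc))
  · exact extendable_of_in (s := inNbrs Adj v) (fun _ _ hy => mem_inNbrs.2 hy) fun c hc =>
      Finset.card_image_inter_lt_of_subset_erase (mem_inNbrs.2 h) (by rwa [card_inNbrs])
        (Finset.image_inter_subset_image_erase (hu c hc))

theorem extendable_of_sameSide (hout : outDeg Adj v ≤ (L v).card)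
    (hin : inDeg Adj v ≤ (L v).card) {u₁ u₂ : V} (hne : u₁ ≠ u₂) (hs : SameSide Adj v u₁ u₂)
    (hu : ∀ c : V → ℕ, (∀ w, r w < r v → c w ∈ L w) → c u₁ = c u₂) : Extendable Adj L r v := by
  classical
  rcases hs with ⟨h₁, h₂⟩ | ⟨h₁, h₂⟩
  · exact extendable_of_out (s := outNbrs Adj v) (fun _ _ hx => mem_outNbrs.2 hx) fun c hc =>
      Finset.card_image_inter_lt_of_subset_erase (mem_outNbrs.2 h₂) (by rwa [card_outNbrs])
        (Finset.inter_subset_left.trans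
          (Finset.image_subset_image_erase (mem_outNbrs.2 h₁) hne (hu c hc)))
  · exact extendable_of_in (s := inNbrs Adj v) (fun _ _ hy => mem_inNbrs.2 hy) fun c hc =>
      Finset.card_image_inter_lt_of_subset_erase (mem_inNbrs.2 h₂) (by rwa [card_inNbrs])
        (Finset.inter_subset_left.trans
          (Finset.image_subset_image_erase (mem_inNbrs.2 h₁) hne (hu c hc)))

end Extendable

section Scenarios

variable {V : Type*} [Fintype V] {Adj : V → V → Prop} {L : V → Finset ℕ}

theorem lColorable_of_exists_deg_lt (hloop : ∀ v, ¬ Adj v v) (hconn : (underGraph Adj).Connected)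
    {k : ℕ} (hk : 0 < k) (hdeg : ∀ v, outDeg Adj v * inDeg Adj v ≤ k * k)
    (hL : ∀ v, k ≤ (L v).card) {v₀ : V} (hv₀ : outDeg Adj v₀ < k ∨ inDeg Adj v₀ < k) :
    LColorable Adj L := by
  obtain ⟨r, hr, -, hlater⟩ := SimpleGraph.exists_rank_toward (Set.mem_univ v₀)
    hconn.connectedOn_univ
  refine lColorable_of_extendable hloop hr fun v => ?_
  by_cases hv : outDeg Adj v < k ∨ inDeg Adj v < k
  · rcases hv with hv | hv
    · exact extendable_of_outDeg_lt (hv.trans_le (hL v))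
    · exact extendable_of_inDeg_lt (hv.trans_le (hL v))
  push Not at hv
  obtain ⟨hout, hin⟩ := eq_of_mul_le_mul_self hk (hdeg v) hv.1 hv.2
  obtain ⟨w, hvw, hrw⟩ := hlater v trivial (by rintro rfl; omega)
  exact extendable_of_adj_of_lt (hout ▸ hL v) (hin ▸ hL v) hvw hrw

/-- Colour `u` first with a colour `γ ∉ L a`, then greedily towards `a`. -/
theorem lColorable_of_adj_of_notMem (hloop : ∀ v, ¬ Adj v v) (hdig : DigonFree Adj)
    (hdeg : ∀ v, outDeg Adj v ≤ (L v).card ∧ inDeg Adj v ≤ (L v).card) {a u : V}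
    (hau : (underGraph Adj).Adj a u) (hu : (underGraph Adj).ConnectedOn {u}ᶜ) {γ : ℕ}
    (hγu : γ ∈ L u) (hγa : γ ∉ L a) :
    LColorable Adj L := by
  classical
  set L' := Function.update L u {γ}
  have hL' : ∀ v, v ≠ u → L' v = L v := fun v hv => Function.update_of_ne hv _ _
  refine LColorable.mono (L' := L') (fun v => ?_) ?_
  · by_cases hv : v = u
    · subst hv
      simpa [L'] using hγu
    · exact (hL' v hv).subset
  obtain ⟨r, hr, hfirst, hlater⟩ := SimpleGraph.exists_rank_toward (Set.mem_compl_singleton_iff.2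
    hau.ne) hu
  refine lColorable_of_extendable hloop hr fun v => ?_
  by_cases hvu : v = u
  · subst hvu
    refine extendable_of_subsingleton hdig (γ := γ) (by simp [L']) fun x y hx _ => ?_
    have := hfirst v (by simp) x
    by_cases hxv : x = v
    · subst hxv; omega
    · exact absurd (this hxv) (by omega)
  have hv := hdeg v
  rw [← hL' v hvu] at hv
  by_cases hva : v = a
  · subst hva
    refine extendable_of_adj_notMem hv.1 hv.2 hau fun c hc => ?_
    have := hc u (hfirst u (by simp) v hvu)
    simp only [L', Function.update_self, Finset.mem_singleton] at this
    rwa [this, hL' v hvu]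
  · obtain ⟨w, hvw, hrw⟩ := hlater v hvu hva
    exact extendable_of_adj_of_lt hv.1 hv.2 hvw hrw

/-- Colour two same-side neighbours `u₁, u₂` of `a` alike first, then greedily towards `a`. -/
theorem lColorable_of_sameSide (hloop : ∀ v, ¬ Adj v v) (hdig : DigonFree Adj)
    (hdeg : ∀ v, outDeg Adj v ≤ (L v).card ∧ inDeg Adj v ≤ (L v).card) {a u₁ u₂ : V}
    (hne : u₁ ≠ u₂) (hs : SameSide Adj a u₁ u₂) (hu : (underGraph Adj).ConnectedOn {u₁, u₂}ᶜ)
    {γ : ℕ} (hγ₁ : γ ∈ L u₁) (hγ₂ : γ ∈ L u₂) :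
    LColorable Adj L := by
  classical
  set P : Set V := {u₁, u₂}
  set L' := fun v => if v ∈ P then {γ} else L v
  have ha : a ∈ Pᶜ := by
    rcases hs with ⟨h₁, h₂⟩ | ⟨h₁, h₂⟩ <;>
    · rintro (rfl | rfl)
      exacts [hloop _ h₁, hloop _ h₂]
  refine LColorable.mono (L' := L') (fun v => ?_) ?_
  · by_cases hv : v ∈ P
    · rcases hv with rfl | rfl <;> simpa [L', P]
    · simp [L', hv]
  obtain ⟨r, hr, hfirst, hlater⟩ := SimpleGraph.exists_rank_toward ha hu
  have hP : ∀ x v, v ∈ P → r x < r v → x ∈ P ∧ x ≠ v := fun x v hv hx =>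
    ⟨by_contra fun h => (hfirst v (by simpa using hv) x h).not_gt hx, by rintro rfl; omega⟩
  refine lColorable_of_extendable hloop hr fun v => ?_
  by_cases hvP : v ∈ P
  · refine extendable_of_subsingleton hdig (γ := γ) (by simp [L', hvP]) fun x y hx hy => ?_
    obtain ⟨hxP, hxv⟩ := hP x v hvP hx
    obtain ⟨hyP, hyv⟩ := hP y v hvP hy
    simp only [P, Set.mem_insert_iff, Set.mem_singleton_iff] at hxP hyP hvP
    grind
  have hv := hdeg v
  have hL'v : L' v = L v := if_neg hvP
  rw [← hL'v] at hv
  by_cases hva : v = a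
  · subst hva
    refine extendable_of_sameSide hv.1 hv.2 hne hs fun c hc => ?_
    have h₁ := hc u₁ (hfirst u₁ (by simp [P]) v ha)
    have h₂ := hc u₂ (hfirst u₂ (by simp [P]) v ha)
    simp only [L', P, Set.mem_insert_iff, Set.mem_singleton_iff, true_or, or_true, if_true,
      Finset.mem_singleton] at h₁ h₂
    rw [h₁, h₂]
  · obtain ⟨w, hvw, hrw⟩ := hlater v hvP hva
    exact extendable_of_adj_of_lt hv.1 hv.2 hvw hrw

end Scenarios

/-- Each side of `a` has at most one vertex in `A`, hence at least `k - 1 ≥ 1` in `{p, q}`; the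
two sides being disjoint, `a` sees `p` and `q` on different sides. -/
theorem adj_of_isFragment_pair {V : Type*} [Fintype V] {Adj : V → V → Prop}
    (hloop : ∀ v, ¬ Adj v v) (hdig : DigonFree Adj) {k : ℕ} (hk : 2 ≤ k) {a : V}
    (ha : outDeg Adj a = k ∧ inDeg Adj a = k) {A : Set V} {p q : V}
    (hA : (underGraph Adj).IsFragment A {p, q}) (haA : a ∈ A)
    (hside : ∀ x ∈ A, ∀ y ∈ A, SameSide Adj a x y → x = y) :
    (underGraph Adj).Adj a p ∧ (underGraph Adj).Adj a q ∧
      ∃ α ∈ A, ∃ u, (u = p ∨ u = q) ∧ Adj a α ∧ Adj a u := by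
  have hnbr : ∀ x, Adj a x ∨ Adj x a → x ∈ A ∨ x = p ∨ x = q := fun x hx => by
    have h := hA.adj_mem a haA x ⟨by rintro rfl; exact hx.elim (hloop _) (hloop _), hx⟩
    simpa only [Set.mem_union, Set.mem_insert_iff, Set.mem_singleton_iff] using h
  have hout : 1 < (outNbrs Adj a).card := by rw [card_outNbrs]; omega
  have hin : 1 < (inNbrs Adj a).card := by rw [card_inNbrs]; omega
  have houtside : ∀ x y, x ≠ y → SameSide Adj a x y → ∃ u, (u = x ∨ u = y) ∧ u ∉ A :=
    fun x y hxy hs => by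
      by_contra! h
      exact hxy (hside x (h x (.inl rfl)) y (h y (.inr rfl)) hs)
  obtain ⟨x, hx, y, hy, hxy⟩ := Finset.one_lt_card.1 hout
  obtain ⟨x', hx', y', hy', hxy'⟩ := Finset.one_lt_card.1 hin
  rw [mem_outNbrs] at hx hy
  rw [mem_inNbrs] at hx' hy'
  obtain ⟨u, hu, huA⟩ := houtside x y hxy (.inl ⟨hx, hy⟩)
  obtain ⟨u', hu', hu'A⟩ := houtside x' y' hxy' (.inr ⟨hx', hy'⟩)
  have hau : Adj a u := by rcases hu with rfl | rfl <;> assumption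
  have hu'a : Adj u' a := by rcases hu' with rfl | rfl <;> assumption
  have huu' : u ≠ u' := by rintro rfl; exact hdig a u hau hu'a
  have hupq := (hnbr u (.inl hau)).resolve_left huA
  have hu'pq := (hnbr u' (.inr hu'a)).resolve_left hu'A
  have hcover : ∀ t, t = p ∨ t = q → t = u ∨ t = u' := by grind
  have hadj : ∀ t, t = p ∨ t = q → (underGraph Adj).Adj a t := fun t ht => by
    rcases hcover t ht with rfl | rfl
    exacts [⟨by rintro rfl; exact huA haA, .inl hau⟩, ⟨by rintro rfl; exact hu'A haA, .inr hu'a⟩]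
  obtain ⟨α, hα, hαu⟩ := (Finset.one_lt_card_iff_nontrivial.1 hout).exists_ne u
  rw [mem_outNbrs] at hα
  have hαA : α ∈ A := (hnbr α (.inl hα)).resolve_right fun h => by
    rcases hcover α h with rfl | rfl
    exacts [hαu rfl, hdig a α hα hu'a]
  exact ⟨hadj p (.inl rfl), hadj q (.inr rfl), α, hαA, u, hupq, hα, hau⟩

theorem exists_sameSide_connectedOn_of_isFragment {V : Type*} [Fintype V] {Adj : V → V → Prop}
    (hloop : ∀ v, ¬ Adj v v) (hdig : DigonFree Adj) {k : ℕ} (hk : 2 ≤ k)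
    (hreg : ∀ v, outDeg Adj v = k ∧ inDeg Adj v = k) {A : Set V} {p q : V}
    (hA : (underGraph Adj).IsFragment A {p, q}) (hpq : p ≠ q)
    (hp : (underGraph Adj).ConnectedOn {p}ᶜ) (hq : (underGraph Adj).ConnectedOn {q}ᶜ)
    (hside : ∀ a ∈ A, ∀ x ∈ A, ∀ y ∈ A, SameSide Adj a x y → x = y) :
    ∃ a α u, α ∈ A ∧ (u = p ∨ u = q) ∧ α ≠ u ∧ SameSide Adj a α u ∧
      (underGraph Adj).ConnectedOn {α, u}ᶜ := by
  set G := underGraph Adj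
  have hadj : ∀ x ∈ A, G.Adj x p ∧ G.Adj x q := fun x hx =>
    let h := adj_of_isFragment_pair hloop hdig hk (hreg x) hA hx (hside x hx)
    ⟨h.1, h.2.1⟩
  obtain ⟨a, ha⟩ := hA.nonempty
  obtain ⟨-, -, α, hα, u, hu, haα, hau⟩ :=
    adj_of_isFragment_pair hloop hdig hk (hreg a) hA ha (hside a ha)
  have huA : u ∉ A := fun h =>
    Set.disjoint_left.1 hA.disjoint h (by rcases hu with rfl | rfl <;> simp)
  refine ⟨a, α, u, hα, hu, by rintro rfl; exact huA hα, .inl ⟨haα, hau⟩, ?_⟩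
  rcases hu with rfl | rfl
  · exact hA.connectedOn_compl_pair hpq (hA.connectedOn_compl_diff hp) hα
      fun x hx => (hadj x hx).2
  · have hA' : G.IsFragment A {u, p} := Set.pair_comm p u ▸ hA
    exact hA'.connectedOn_compl_pair hpq.symm (hA'.connectedOn_compl_diff hq) hα
      fun x hx => (hadj x hx).1

/-- Failing that, a smallest component `A ⊆ A₀` of `G - {p, q}` with `p, q ∈ A₀` contains no
separating pair, by minimality. -/
theorem exists_sameSide_connectedOn_compl {V : Type*} [Fintype V] {Adj : V → V → Prop}
    (hloop : ∀ v, ¬ Adj v v) (hdig : DigonFree Adj) {k : ℕ} (hk : 2 ≤ k)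
    (hreg : ∀ v, outDeg Adj v = k ∧ inDeg Adj v = k) {A₀ : Set V} {z : V}
    (hA₀ : (underGraph Adj).IsFragment A₀ {z}) (hA₀c : (underGraph Adj).ConnectedOn A₀ᶜ)
    (hcut : ∀ v ∈ A₀, (underGraph Adj).ConnectedOn {v}ᶜ) :
    ∃ a u₁ u₂, u₁ ∈ A₀ ∧ u₂ ∈ A₀ ∧ u₁ ≠ u₂ ∧ SameSide Adj a u₁ u₂ ∧
      (underGraph Adj).ConnectedOn {u₁, u₂}ᶜ := by
  set G := underGraph Adj
  by_contra! hno
  have hzA₀ : z ∉ A₀ := fun h => Set.disjoint_left.1 hA₀.disjoint h rfl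
  set F := {A | A ⊆ A₀ ∧ ∃ p ∈ A₀, ∃ q ∈ A₀, p ≠ q ∧ G.IsFragment A {p, q}}
  have hF : F.Nonempty := by
    obtain ⟨a, ha⟩ := hA₀.nonempty
    obtain ⟨x, y, hxy, hs, hxz, hyz⟩ := exists_sameSide_ne hdig hk (hreg a) z
    have hmem : ∀ t, Adj a t ∨ Adj t a → t ≠ z → t ∈ A₀ := fun t ht htz =>
      (hA₀.adj_mem a ha t ⟨by rintro rfl; exact ht.elim (hloop _) (hloop _), ht⟩).resolve_right
        htz
    have hx : x ∈ A₀ := hmem x (hs.imp And.left And.left) hxz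
    have hy : y ∈ A₀ := hmem y (hs.imp And.right And.right) hyz
    obtain ⟨A, hAA₀, hA⟩ := G.exists_isFragment_subset (hno a x y hx hy hxy hs)
      (Set.insert_subset hx (Set.singleton_subset_iff.2 hy)) hA₀c
    exact ⟨A, hAA₀, x, hx, y, hy, hxy, hA⟩
  obtain ⟨A, ⟨hAA₀, p, hp, q, hq, hpq, hA⟩, hmin⟩ :=
    Set.exists_min_image F Set.ncard (Set.toFinite F) hF
  have hAc : G.ConnectedOn Aᶜ := hA.connectedOn_compl (hcut p hp) (hcut q hq) hpq
    (fun h => hzA₀ (hAA₀ h)) (by rintro rfl; exact hzA₀ hp) (by rintro rfl; exact hzA₀ hq)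
  have hpair : ∀ x ∈ A, ∀ y ∈ A, x ≠ y → G.ConnectedOn {x, y}ᶜ := by
    intro x hx y hy hxy
    by_contra h
    obtain ⟨A', hA'A, hA'⟩ := G.exists_isFragment_subset h
      (Set.insert_subset hx (Set.singleton_subset_iff.2 hy)) hAc
    exact (hA'.ncard_lt hA'A (Set.mem_insert x _) hx).not_ge
      (hmin A' ⟨hA'A.trans hAA₀, x, hAA₀ hx, y, hAA₀ hy, hxy, hA'⟩)
  obtain ⟨a, α, u, hα, hu, hne, hs, hcon⟩ :=
    exists_sameSide_connectedOn_of_isFragment hloop hdig hk hreg hA hpq (hcut p hp) (hcut q hq)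
      fun a _ x hx y hy hs => by_contra fun hxy =>
        hno a x y (hAA₀ hx) (hAA₀ hy) hxy hs (hpair x hx y hy hxy)
  exact hno a α u (hAA₀ hα) (by rcases hu with rfl | rfl <;> assumption) hne hs hcon

/-- Unless the lists agree across every edge `a u` with `u` not a cut vertex, colour `u` first
with a colour outside `L a`. Otherwise the lists are constant on a leaf block, and its
non-separating same-side pair shares a colour. -/
theorem lColorable_of_regular {V : Type*} [Fintype V] {Adj : V → V → Prop}
    (hloop : ∀ v, ¬ Adj v v) (hconn : (underGraph Adj).Connected) (hdig : DigonFree Adj) {k : ℕ}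
    (hk : 2 ≤ k) (hreg : ∀ v, outDeg Adj v = k ∧ inDeg Adj v = k) {L : V → Finset ℕ}
    (hL : ∀ v, (L v).card = k) : LColorable Adj L := by
  set G := underGraph Adj
  by_contra hcol
  have hdeg : ∀ v, outDeg Adj v ≤ (L v).card ∧ inDeg Adj v ≤ (L v).card := fun v => by
    simp [hreg, hL]
  have hnbr : ∀ a u, G.Adj a u → G.ConnectedOn {u}ᶜ → L a = L u := by
    intro a u hau hu
    by_contra hne
    obtain ⟨γ, hγu, hγa⟩ := Finset.not_subset.1 fun hsub =>
      hne (Finset.eq_of_subset_of_card_le hsub (by rw [hL, hL])).symm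
    exact hcol (lColorable_of_adj_of_notMem hloop hdig hdeg hau hu hγu hγa)
  obtain ⟨v⟩ := hconn.nonempty
  obtain ⟨w, hw⟩ := Finset.card_pos.1 (by rw [card_outNbrs, (hreg v).1]; omega :
    0 < (outNbrs Adj v).card)
  have : Nontrivial V := nontrivial_of_ne v w fun h => by subst h; exact hloop v (mem_outNbrs.1 hw)
  obtain ⟨A₀, z, hA₀, hA₀c, hcut⟩ := hconn.exists_isFragment_nonseparating
  obtain ⟨a, u₁, u₂, hu₁, hu₂, hne, hs, hu⟩ :=
    exists_sameSide_connectedOn_compl hloop hdig hk hreg hA₀ hA₀c hcut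
  have hLu : L u₁ = L u₂ := hA₀.connectedOn.eq_of_adj
    (fun x _ y hy hxy => hnbr x y hxy (hcut y hy)) hu₁ hu₂
  obtain ⟨γ, hγ⟩ := Finset.card_pos.1 (by rw [hL]; omega : 0 < (L u₁).card)
  exact hcol (lColorable_of_sameSide hloop hdig hdeg hne hs hu hγ (hLu ▸ hγ))

/-- **Lemma 5.** Let `D` be a connected digraph without digons with `Δ̃ = Δ̃(D)`.
If `Δ̃ > 1`, then `χ_l(D) ≤ ⌈Δ̃⌉`. -/
theorem stmt_7 {V : Type} [Fintype V] (Adj : V → V → Prop)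
    (hloopless : ∀ v, ¬ Adj v v)
    (hconn : (underGraph Adj).Connected)
    (hdigon : DigonFree Adj)
    (hΔ : 1 < tildeDelta Adj) :
    listChromNum Adj ≤ ⌈tildeDelta Adj⌉₊ := by
  set k := ⌈tildeDelta Adj⌉₊
  have hk : 2 ≤ k := Nat.lt_ceil.2 (by exact_mod_cast hΔ)
  refine Nat.sInf_le fun L hL => ?_
  choose L' hL'L hL' using fun v => Finset.exists_subset_card_eq (hL v)
  refine LColorable.mono hL'L ?_
  by_cases hv₀ : ∃ v₀, outDeg Adj v₀ < k ∨ inDeg Adj v₀ < k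
  · obtain ⟨v₀, hv₀⟩ := hv₀
    exact lColorable_of_exists_deg_lt hloopless hconn (by omega) (outDeg_mul_inDeg_le Adj)
      (fun v => (hL' v).ge) hv₀
  · push Not at hv₀
    exact lColorable_of_regular hloopless hconn hdigon hk
      (fun v => eq_of_mul_le_mul_self (by omega) (outDeg_mul_inDeg_le Adj v) (hv₀ v).1 (hv₀ v).2)
      hL'
end

section
/- Suppose Δ₀ is an integer such that every digon-free digraph D with ⌈Δ̃(D)⌉ = Δ₀ satisfies χ(D) ≤ Δ₀ − 1. Then there exists a positive constant α < 1 such that every digon-free digraph D with ⌈Δ̃(D)⌉ ≥ Δ₀ satisfies χ(D) ≤ α · ⌈Δ̃(D)⌉. -/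
/-!
Padding a digraph with a disjoint directed triangle whose vertices are blown up into `Δ₀`
independent copies makes `⌈Δ̃⌉` exactly `Δ₀` and does not decrease `χ`, so the hypothesis gives
`Δ₀ - 1` colours to every vertex set `S` on which out- and in-degree inside `S` have product at
most `Δ₀²`. Removing a maximal acyclic set lowers both degrees of every remaining vertex, which
gives `χ ≤ Δ - 1` for every `Δ = ⌈Δ̃⌉ ≥ Δ₀`; this suffices while `Δ ≤ K = (2Δ₀ + 1)²`.

For larger `Δ`, vertices with in- or out-degree below `β ≈ (1 - 1/K) Δ` are removed one by one
and coloured greedily with `β` colours. In the remaining core both degrees are at least `β` and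
their product is at most `Δ²`, so their sum is at most about `2Δ`. Lovász's partition lemma
splits the core into about `2Δ / (2Δ₀ + 1)` parts in which every degree sum is at most `2Δ₀`,
hence every degree product at most `Δ₀²`; each part takes `Δ₀ - 1` colours, and
`2Δ (Δ₀ - 1) / (2Δ₀ + 1) < (1 - 1/K) Δ`.
-/

open Finset Relation

theorem DigonFree.irrefl {V : Type*} {Adj : V → V → Prop} (h : DigonFree Adj) (v : V) :
    ¬ Adj v v :=
  fun hv => h v v hv hv

section Acyclic

variable {V : Type*} {Adj : V → V → Prop} {A B : Set V} {v : V}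

theorem AcyclicSet.mono (hB : AcyclicSet Adj B) (hAB : A ⊆ B) : AcyclicSet Adj A :=
  fun v hv hcyc => hB v (hAB hv) <|
    TransGen.mono (fun _ _ h => ⟨hAB h.1, hAB h.2.1, h.2.2⟩) _ _ hcyc

theorem AcyclicSet.flip (hA : AcyclicSet Adj A) : AcyclicSet (flip Adj) A :=
  fun v hv hcyc => hA v hv <|
    TransGen.mono (fun _ _ h => ⟨h.2.1, h.1, h.2.2⟩) _ _ (TransGen.swap _ _ hcyc)

/-- `v` has no successor inside `insert v A`, so no closed walk there passes through `v`. -/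
theorem AcyclicSet.insert_of_forall_not_adj_out (hA : AcyclicSet Adj A) (hvv : ¬ Adj v v)
    (hout : ∀ u ∈ A, ¬ Adj v u) : AcyclicSet Adj (insert v A) := by
  set R := fun x y => x ∈ insert v A ∧ y ∈ insert v A ∧ Adj x y
  have mem_of_step : ∀ {x y}, R x y → x ∈ A := by
    rintro x y ⟨hx, hy, hxy⟩
    refine (Set.mem_insert_iff.1 hx).resolve_left ?_
    rintro rfl
    rcases Set.mem_insert_iff.1 hy with rfl | hyA
    exacts [hvv hxy, hout y hyA hxy]
  have walk_in_A : ∀ {x y}, TransGen R x y → y ∈ A →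
      TransGen (fun x y => x ∈ A ∧ y ∈ A ∧ Adj x y) x y := by
    intro x y hxy hy
    induction hxy with
    | single h => exact .single ⟨mem_of_step h, hy, h.2.2⟩
    | tail _ h ih => exact (ih (mem_of_step h)).tail ⟨mem_of_step h, hy, h.2.2⟩
  intro w _ hcyc
  obtain ⟨z, hwz, -⟩ := TransGen.head'_iff.1 hcyc
  exact hA w (mem_of_step hwz) (walk_in_A hcyc (mem_of_step hwz))

theorem AcyclicSet.insert_of_forall_not_adj_in (hA : AcyclicSet Adj A) (hvv : ¬ Adj v v)
    (hin : ∀ u ∈ A, ¬ Adj u v) : AcyclicSet Adj (insert v A) :=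
  (hA.flip.insert_of_forall_not_adj_out hvv hin).flip

theorem acyclicSet_singleton (hvv : ¬ Adj v v) : AcyclicSet Adj {v} := by
  simpa using (show AcyclicSet Adj ∅ from fun _ h => h.elim).insert_of_forall_not_adj_out hvv
    (by simp)

theorem exists_adj_of_not_acyclicSet_insert (hA : AcyclicSet Adj A) (hvv : ¬ Adj v v)
    (h : ¬ AcyclicSet Adj (insert v A)) : (∃ u ∈ A, Adj v u) ∧ ∃ u ∈ A, Adj u v := by
  constructor <;> by_contra! hv
  exacts [h (hA.insert_of_forall_not_adj_out hvv hv), h (hA.insert_of_forall_not_adj_in hvv hv)]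

theorem exists_maximal_acyclicSet [Finite V] (S : Set V) :
    ∃ A ⊆ S, AcyclicSet Adj A ∧ ∀ v ∈ S, v ∉ A → ¬ AcyclicSet Adj (insert v A) := by
  obtain ⟨A, ⟨hAS, hA⟩, hmax⟩ :=
    (Set.toFinite {A : Set V | A ⊆ S ∧ AcyclicSet Adj A}).exists_maximal
      ⟨∅, Set.empty_subset S, fun _ h => h.elim⟩
  refine ⟨A, hAS, hA, fun v hvS hvA hins => hvA ?_⟩
  exact hmax ⟨Set.insert_subset hvS hAS, hins⟩ (Set.subset_insert v A) (Set.mem_insert v A)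

end Acyclic

section DegreeOn

theorem outDeg_eq_ncard {V : Type*} (Adj : V → V → Prop) (v : V) :
    outDeg Adj v = {u | Adj v u}.ncard :=
  Nat.card_coe_set_eq _

variable {V : Type*} {Adj : V → V → Prop} {S T : Set V} {v : V}

noncomputable def outDegOn (Adj : V → V → Prop) (S : Set V) (v : V) : ℕ :=
  {u | u ∈ S ∧ Adj v u}.ncard

noncomputable def inDegOn (Adj : V → V → Prop) (S : Set V) (v : V) : ℕ :=
  outDegOn (flip Adj) S v

variable [Finite V]

theorem outDegOn_mono (hST : S ⊆ T) : outDegOn Adj S v ≤ outDegOn Adj T v :=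
  Set.ncard_le_ncard fun _ h => ⟨hST h.1, h.2⟩

theorem inDegOn_mono (hST : S ⊆ T) : inDegOn Adj S v ≤ inDegOn Adj T v :=
  outDegOn_mono hST

theorem outDegOn_le_outDeg : outDegOn Adj S v ≤ outDeg Adj v :=
  (Set.ncard_le_ncard fun _ h => h.2).trans_eq (outDeg_eq_ncard Adj v).symm

theorem inDegOn_le_inDeg : inDegOn Adj S v ≤ inDeg Adj v :=
  outDegOn_le_outDeg (Adj := flip Adj)

theorem outDegOn_sdiff_lt {A : Set V} {u : V} (huS : u ∈ S) (huA : u ∈ A) (hvu : Adj v u) :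
    outDegOn Adj (S \ A) v < outDegOn Adj S v := by
  refine Set.ncard_lt_ncard ((Set.ssubset_iff_of_subset ?_).2 ⟨u, ⟨huS, hvu⟩, ?_⟩)
  exacts [fun _ h => ⟨h.1.1, h.2⟩, fun h => h.1.2 huA]

theorem inDegOn_sdiff_lt {A : Set V} {u : V} (huS : u ∈ S) (huA : u ∈ A) (huv : Adj u v) :
    inDegOn Adj (S \ A) v < inDegOn Adj S v :=
  outDegOn_sdiff_lt (Adj := flip Adj) huS huA huv

end DegreeOn

section ColorableOn

variable {V : Type*} {Adj : V → V → Prop} {S T A B : Set V} {k m : ℕ}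

/-- A `k`-colouring of the subdigraph induced on `S`; colours off `S` are irrelevant. -/
def ColorableOn (Adj : V → V → Prop) (S : Set V) (k : ℕ) : Prop :=
  ∃ f : V → ℕ, (∀ v ∈ S, f v < k) ∧ ∀ i, AcyclicSet Adj {v | v ∈ S ∧ f v = i}

theorem ColorableOn.mono (h : ColorableOn Adj S k) (hkm : k ≤ m) : ColorableOn Adj S m :=
  let ⟨f, hf, hacyc⟩ := h
  ⟨f, fun v hv => (hf v hv).trans_le hkm, hacyc⟩

theorem ColorableOn.subset (h : ColorableOn Adj S k) (hTS : T ⊆ S) : ColorableOn Adj T k :=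
  let ⟨f, hf, hacyc⟩ := h
  ⟨f, fun v hv => hf v (hTS hv), fun i => (hacyc i).mono fun _ hv => ⟨hTS hv.1, hv.2⟩⟩

theorem ColorableOn.flip (h : ColorableOn Adj S k) : ColorableOn (flip Adj) S k :=
  let ⟨f, hf, hacyc⟩ := h
  ⟨f, hf, fun i => (hacyc i).flip⟩

theorem AcyclicSet.colorableOn (h : AcyclicSet Adj S) : ColorableOn Adj S 1 :=
  ⟨fun _ => 0, fun _ _ => Nat.one_pos, fun _ => h.mono fun _ hv => hv.1⟩

theorem ColorableOn.union {a b : ℕ} (hA : ColorableOn Adj A a) (hB : ColorableOn Adj B b) :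
    ColorableOn Adj (A ∪ B) (a + b) := by
  classical
  obtain ⟨f, hf, hfacyc⟩ := hA
  obtain ⟨g, hg, hgacyc⟩ := hB
  refine ⟨fun v => if v ∈ A then f v else a + g v, ?_, fun i => ?_⟩
  · rintro v (hv | hv) <;> by_cases hvA : v ∈ A <;> simp only [hvA, if_true, if_false]
    exacts [by linarith [hf v hvA], absurd hv hvA, by linarith [hf v hvA], by linarith [hg v hv]]
  · by_cases hia : i < a
    · refine (hfacyc i).mono ?_
      rintro v ⟨-, hv⟩
      by_cases hvA : v ∈ A <;> simp only [hvA, if_true, if_false] at hv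
      exacts [⟨hvA, hv⟩, by omega]
    · refine (hgacyc (i - a)).mono ?_
      rintro v ⟨hvAB, hv⟩
      by_cases hvA : v ∈ A <;> simp only [hvA, if_true, if_false] at hv
      exacts [absurd (hv ▸ hf v hvA) hia, ⟨hvAB.resolve_left hvA, by omega⟩]

theorem ColorableOn.biUnion {ι : Type*} {P : ι → Set V} {c : ℕ} (s : Finset ι)
    (h : ∀ i ∈ s, ColorableOn Adj (P i) c) : ColorableOn Adj (⋃ i ∈ s, P i) (#s * c) := by
  classical
  induction s using Finset.induction_on with
  | empty => exact ⟨fun _ => 0, by simp, fun _ _ hv => by simp at hv⟩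
  | insert i s his ih =>
    rw [set_biUnion_insert, card_insert_of_notMem his, add_mul, one_mul, add_comm]
    exact (h i (mem_insert_self i s)).union (ih fun j hj => h j (mem_insert_of_mem hj))

theorem ColorableOn.insert_of_outDegOn_lt [Finite V] {v : V} (h : ColorableOn Adj S m)
    (hvv : ¬ Adj v v) (hv : outDegOn Adj S v < m) : ColorableOn Adj (insert v S) m := by
  classical
  obtain ⟨f, hf, hacyc⟩ := h
  obtain ⟨i, him, hfree⟩ : ∃ i < m, i ∉ f '' {u | u ∈ S ∧ Adj v u} := by
    by_contra! hall
    have hle := Set.ncard_le_ncard (fun i hi => hall i (mem_range.1 hi) :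
      (range m : Set ℕ) ⊆ f '' {u | u ∈ S ∧ Adj v u}) ((Set.toFinite _).image f)
    rw [Set.ncard_coe_finset, card_range] at hle
    exact (hle.trans (Set.ncard_image_le (Set.toFinite _))).not_gt hv
  refine ⟨Function.update f v i, fun u hu => ?_, fun j => ?_⟩
  · rcases eq_or_ne u v with rfl | huv
    · simpa using him
    · simpa [huv] using hf u (hu.resolve_left huv)
  · have hsub : {u | u ∈ insert v S ∧ Function.update f v i u = j} ⊆
        insert v {u | u ∈ S ∧ f u = j} := by
      rintro u ⟨hu, hfu⟩
      rcases eq_or_ne u v with rfl | huv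
      · exact Set.mem_insert u _
      · exact Or.inr ⟨hu.resolve_left huv, by simpa [huv] using hfu⟩
    by_cases hji : j = i
    · subst hji
      refine ((hacyc j).insert_of_forall_not_adj_out hvv ?_).mono hsub
      rintro u ⟨huS, hfu⟩ hvu
      exact hfree ⟨u, ⟨huS, hvu⟩, hfu⟩
    · refine (hacyc j).mono fun u hu => ?_
      rcases hsub hu with rfl | hu'
      · exact absurd (by simpa using hu.2) (Ne.symm hji)
      · exact hu'

theorem ColorableOn.insert_of_inDegOn_lt [Finite V] {v : V} (h : ColorableOn Adj S m)
    (hvv : ¬ Adj v v) (hv : inDegOn Adj S v < m) : ColorableOn Adj (insert v S) m :=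
  (h.flip.insert_of_outDegOn_lt hvv hv).flip

theorem ColorableOn.diColorable (h : ColorableOn Adj Set.univ k) : DiColorable Adj k :=
  let ⟨f, hf, hacyc⟩ := h
  ⟨fun v => ⟨f v, hf v trivial⟩,
    fun i => (hacyc i).mono fun _ hv => ⟨trivial, congrArg Fin.val hv⟩⟩

theorem dichromNum_le_of_colorableOn (h : ColorableOn Adj Set.univ k) : dichromNum Adj ≤ k :=
  Nat.sInf_le h.diColorable

end ColorableOn

section Degeneracy

variable {V : Type*} [Finite V] {Adj : V → V → Prop}

/-- Vertices of in- or out-degree below `β` are deleted one at a time and coloured greedily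
when put back; what is left has all in- and out-degrees at least `β`. -/
theorem colorableOn_max_of_forall_minDeg (hirr : ∀ v, ¬ Adj v v) {β c : ℕ} (S : Set V)
    (hcore : ∀ T ⊆ S, (∀ v ∈ T, β ≤ outDegOn Adj T v ∧ β ≤ inDegOn Adj T v) →
      ColorableOn Adj T c) :
    ColorableOn Adj S (max β c) := by
  by_cases hS : ∀ v ∈ S, β ≤ outDegOn Adj S v ∧ β ≤ inDegOn Adj S v
  · exact (hcore S subset_rfl hS).mono (le_max_right β c)
  push Not at hS
  obtain ⟨v, hvS, hv⟩ := hS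
  have ih : ColorableOn Adj (S \ {v}) (max β c) :=
    colorableOn_max_of_forall_minDeg hirr (S \ {v}) fun T hT =>
      hcore T (hT.trans Set.sdiff_subset)
  rw [← Set.insert_eq_of_mem hvS, ← Set.insert_sdiff_singleton]
  rcases lt_or_ge (outDegOn Adj S v) β with hout | hout
  · exact ih.insert_of_outDegOn_lt (hirr v)
      ((outDegOn_mono Set.sdiff_subset).trans_lt (hout.trans_le (le_max_left β c)))
  · exact ih.insert_of_inDegOn_lt (hirr v)
      ((inDegOn_mono Set.sdiff_subset).trans_lt ((hv hout).trans_le (le_max_left β c)))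
termination_by S.ncard
decreasing_by exact Set.ncard_sdiff_singleton_lt_of_mem hvS

end Degeneracy

theorem Nat.sub_one_mul_sub_one_le_sq {a b n : ℕ} (ha : 1 ≤ a) (hb : 1 ≤ b)
    (hab : a * b ≤ (n + 1) ^ 2) : (a - 1) * (b - 1) ≤ n ^ 2 := by
  obtain ⟨a, rfl⟩ := Nat.exists_eq_add_of_le' ha
  obtain ⟨b, rfl⟩ := Nat.exists_eq_add_of_le' hb
  simp only [Nat.add_sub_cancel]
  rcases le_or_gt (2 * n) (a + b) with hs | hs
  · nlinarith
  · nlinarith [sq_nonneg ((a : ℤ) - b)]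

/-- Removing a maximal acyclic subset lowers every remaining in- and out-degree. -/
theorem colorableOn_succ_of_forall {V : Type*} [Finite V] {Adj : V → V → Prop}
    (hirr : ∀ v, ¬ Adj v v) {n c : ℕ}
    (h : ∀ S : Set V, (∀ v ∈ S, outDegOn Adj S v * inDegOn Adj S v ≤ n ^ 2) →
      ColorableOn Adj S c)
    (S : Set V) (hS : ∀ v ∈ S, outDegOn Adj S v * inDegOn Adj S v ≤ (n + 1) ^ 2) :
    ColorableOn Adj S (c + 1) := by
  obtain ⟨A, hAS, hA, hmax⟩ := exists_maximal_acyclicSet (Adj := Adj) S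
  have hrest : ColorableOn Adj (S \ A) c := by
    refine h _ fun v hv => ?_
    obtain ⟨⟨u, huA, hvu⟩, ⟨w, hwA, hwv⟩⟩ :=
      exists_adj_of_not_acyclicSet_insert hA (hirr v) (hmax v hv.1 hv.2)
    have hout := outDegOn_sdiff_lt (hAS huA) huA hvu
    have hin := inDegOn_sdiff_lt (hAS hwA) hwA hwv
    calc outDegOn Adj (S \ A) v * inDegOn Adj (S \ A) v
        ≤ (outDegOn Adj S v - 1) * (inDegOn Adj S v - 1) := by gcongr <;> omega
      _ ≤ n ^ 2 := Nat.sub_one_mul_sub_one_le_sq (by omega) (by omega) (hS v hv.1)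
  rw [← Set.union_sdiff_cancel hAS, add_comm]
  exact hA.colorableOn.union hrest

theorem Set.ncard_setOf_eq_sum {V : Type*} [Fintype V] (p : V → Prop) [DecidablePred p] :
    {v | p v}.ncard = ∑ v, if p v then 1 else 0 := by
  rw [Set.ncard_eq_toFinset_card', Set.toFinset_ofPred, card_filter]

theorem Finset.sum_sum_eq_row_add_column {V M : Type*} [Fintype V] [DecidableEq V]
    [AddCommMonoid M] (F : V → V → M) (v : V) :
    ∑ u, ∑ w, F u w =
      ∑ w, F v w + ∑ u ∈ univ.erase v, F u v +
        ∑ u ∈ univ.erase v, ∑ w ∈ univ.erase v, F u w := by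
  rw [← add_sum_erase _ _ (mem_univ v), add_assoc, ← sum_add_distrib]
  congr 1
  exact sum_congr rfl fun u _ => (add_sum_erase _ _ (mem_univ v)).symm

section Partition

variable {V : Type*} [Fintype V] {r : V → V → Prop} {S : Set V} {k : ℕ}

open scoped Classical in
noncomputable def monoArcs (r : V → V → Prop) (S : Set V) (g : V → Fin k) : ℕ :=
  ∑ u, ∑ w, if u ∈ S ∧ w ∈ S ∧ r u w ∧ g u = g w then 1 else 0

theorem sum_outDegOn_inter_fiber (g : V → Fin k) (v : V) :
    ∑ c, outDegOn r (S ∩ {u | g u = c}) v = outDegOn r S v := by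
  classical
  simp only [outDegOn, Set.ncard_setOf_eq_sum]
  rw [sum_comm]
  refine sum_congr rfl fun u _ => ?_
  simp [Set.mem_inter_iff, ite_and, Finset.sum_ite_eq]

theorem sum_inDegOn_inter_fiber (g : V → Fin k) (v : V) :
    ∑ c, inDegOn r (S ∩ {u | g u = c}) v = inDegOn r S v :=
  sum_outDegOn_inter_fiber (r := flip r) g v

/-- Recolouring `v` only changes the status of the arcs at `v`. -/
theorem monoArcs_update_add [DecidableEq V] (hirr : ∀ v, ¬ r v v) (g : V → Fin k) {v : V}
    (hv : v ∈ S) (j : Fin k) :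
    monoArcs r S (Function.update g v j) +
        (outDegOn r (S ∩ {u | g u = g v}) v + inDegOn r (S ∩ {u | g u = g v}) v) =
      monoArcs r S g +
        (outDegOn r (S ∩ {u | g u = j}) v + inDegOn r (S ∩ {u | g u = j}) v) := by
  classical
  set m : (V → Fin k) → V → V → ℕ := fun h u w =>
    if u ∈ S ∧ w ∈ S ∧ r u w ∧ h u = h w then 1 else 0
  have key : ∀ j, monoArcs r S (Function.update g v j) =
      outDegOn r (S ∩ {u | g u = j}) v + inDegOn r (S ∩ {u | g u = j}) v +
        ∑ u ∈ univ.erase v, ∑ w ∈ univ.erase v, m g u w := by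
    intro j
    rw [monoArcs, sum_sum_eq_row_add_column _ v, inDegOn, outDegOn, outDegOn,
      Set.ncard_setOf_eq_sum, Set.ncard_setOf_eq_sum, sum_erase _ (by simp [hirr])]
    congr 1
    · congr 1 <;> refine sum_congr rfl fun w _ => ?_ <;> rcases eq_or_ne w v with rfl | hw
      · simp [hirr]
      · simp [hv, hw, eq_comm, and_assoc, and_comm]
      · simp [hirr, flip]
      · simp [hv, hw, flip, and_assoc, and_comm]
    · refine sum_congr rfl fun u hu => sum_congr rfl fun w hw => ?_
      simp [m, Function.update_of_ne (ne_of_mem_erase hu),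
        Function.update_of_ne (ne_of_mem_erase hw)]
  rw [key j, ← Function.update_eq_self v g, key (g v), Function.update_eq_self]
  ring

/-- Lovász's partition lemma: a colouring minimising `monoArcs` is locally optimal. -/
theorem exists_partition_degOn_le (hirr : ∀ v, ¬ r v v) {t : ℕ} (hk : 0 < k)
    (hS : ∀ v ∈ S, outDegOn r S v + inDegOn r S v < k * (t + 1)) :
    ∃ g : V → Fin k, ∀ v ∈ S,
      outDegOn r (S ∩ {u | g u = g v}) v + inDegOn r (S ∩ {u | g u = g v}) v ≤ t := by
  classical
  have : Nonempty (Fin k) := ⟨⟨0, hk⟩⟩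
  obtain ⟨g, -, hmin⟩ :=
    exists_min_image (univ : Finset (V → Fin k)) (monoArcs r S) univ_nonempty
  refine ⟨g, fun v hv => ?_⟩
  by_contra! hbig
  obtain ⟨c, -, hc⟩ : ∃ c ∈ univ,
      outDegOn r (S ∩ {u | g u = c}) v + inDegOn r (S ∩ {u | g u = c}) v < t + 1 := by
    refine exists_lt_of_sum_lt ?_
    simpa [sum_add_distrib, sum_outDegOn_inter_fiber, sum_inDegOn_inter_fiber] using hS v hv
  have := monoArcs_update_add hirr g hv c
  have := hmin (Function.update g v c) (mem_univ _)
  omega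

end Partition

section DichromNum

variable {V W : Type*} {Adj : V → V → Prop} {E : W → W → Prop} {k : ℕ}

theorem diColorable_card [Fintype V] (hirr : ∀ v, ¬ Adj v v) :
    DiColorable Adj (Fintype.card V) :=
  ⟨Fintype.equivFin V, fun i =>
    (acyclicSet_singleton (hirr ((Fintype.equivFin V).symm i))).mono
      fun _ hv => Set.mem_singleton_iff.2 ((Fintype.equivFin V).eq_symm_apply.2 hv)⟩

theorem diColorable_dichromNum [Fintype V] (hirr : ∀ v, ¬ Adj v v) :
    DiColorable Adj (dichromNum Adj) :=
  Nat.sInf_mem (s := {k | DiColorable Adj k}) ⟨_, diColorable_card hirr⟩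

theorem DiColorable.comap (φ : V → W) (hφ : ∀ a b, Adj a b → E (φ a) (φ b))
    (h : DiColorable E k) : DiColorable Adj k :=
  let ⟨f, hf⟩ := h
  ⟨f ∘ φ, fun i v hv hcyc =>
    hf i (φ v) hv (TransGen.lift φ (fun a b hab => ⟨hab.1, hab.2.1, hφ a b hab.2.2⟩) v v hcyc)⟩

theorem dichromNum_le_of_hom [Fintype W] (hE : ∀ w, ¬ E w w) (φ : V → W)
    (hφ : ∀ a b, Adj a b → E (φ a) (φ b)) : dichromNum Adj ≤ dichromNum E :=
  Nat.sInf_le ((diColorable_dichromNum hE).comap φ hφ)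

end DichromNum

section TildeDelta

variable {V : Type*} [Fintype V] {Adj : V → V → Prop}

theorem sqrt_le_tildeDelta (v : V) : √((outDeg Adj v : ℝ) * inDeg Adj v) ≤ tildeDelta Adj :=
  le_ciSup (f := fun v => √((outDeg Adj v : ℝ) * inDeg Adj v)) (Set.finite_range _).bddAbove v

theorem tildeDelta_le_iff {n : ℕ} :
    tildeDelta Adj ≤ n ↔ ∀ v, outDeg Adj v * inDeg Adj v ≤ n ^ 2 := by
  have key (v : V) :
      √((outDeg Adj v : ℝ) * inDeg Adj v) ≤ n ↔ outDeg Adj v * inDeg Adj v ≤ n ^ 2 := by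
    rw [Real.sqrt_le_left (Nat.cast_nonneg n)]
    norm_cast
  exact ⟨fun h v => (key v).1 ((sqrt_le_tildeDelta v).trans h),
    fun h => Real.iSup_le (fun v => (key v).2 (h v)) (Nat.cast_nonneg n)⟩

theorem outDegOn_mul_inDegOn_le_ceil_tildeDelta_sq (S : Set V) (v : V) :
    outDegOn Adj S v * inDegOn Adj S v ≤ ⌈tildeDelta Adj⌉₊ ^ 2 :=
  (Nat.mul_le_mul outDegOn_le_outDeg inDegOn_le_inDeg).trans
    (tildeDelta_le_iff.1 (Nat.le_ceil _) v)

end TildeDelta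

section DisjointUnion

variable {V W : Type*} (r : V → V → Prop) (s : W → W → Prop)

theorem outDeg_liftRel (x : V ⊕ W) :
    outDeg (Sum.LiftRel r s) x = Sum.elim (outDeg r) (outDeg s) x := by
  simp only [outDeg_eq_ncard]
  rcases x with a | b
  · have : {y | Sum.LiftRel r s (.inl a) y} = Sum.inl '' {c | r a c} := by
      ext (c | c) <;> simp
    simp only [Sum.elim_inl]
    rw [this, Set.ncard_image_of_injective _ Sum.inl_injective, outDeg_eq_ncard]
  · have : {y | Sum.LiftRel r s (.inr b) y} = Sum.inr '' {c | s b c} := by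
      ext (c | c) <;> simp
    simp only [Sum.elim_inr]
    rw [this, Set.ncard_image_of_injective _ Sum.inr_injective, outDeg_eq_ncard]

theorem flip_liftRel : flip (Sum.LiftRel r s) = Sum.LiftRel (flip r) (flip s) := by
  funext x y
  rcases x with a | b <;> rcases y with c | d <;> simp [flip]

theorem inDeg_liftRel (x : V ⊕ W) :
    inDeg (Sum.LiftRel r s) x = Sum.elim (inDeg r) (inDeg s) x := by
  have := outDeg_liftRel (flip r) (flip s) x
  rw [← flip_liftRel] at this
  exact this

variable {r s}

theorem DigonFree.liftRel (hr : DigonFree r) (hs : DigonFree s) :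
    DigonFree (Sum.LiftRel r s) := by
  rintro _ _ (⟨h⟩ | ⟨h⟩) (⟨h'⟩ | ⟨h'⟩)
  exacts [hr _ _ h h', hs _ _ h h']

end DisjointUnion

theorem Nat.card_subtype_fst_eq {α β : Type*} (i : α) :
    Nat.card {q : α × β // q.1 = i} = Nat.card β := by
  rw [Nat.card_congr (Equiv.prodSubtypeFstEquivSubtypeProd (p := (· = i))), Nat.card_prod]
  simp

def triangleBlowup (n : ℕ) (p q : Fin 3 × Fin n) : Prop :=
  q.1 = p.1 + 1

section TriangleBlowup

variable {n : ℕ}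

theorem digonFree_triangleBlowup : DigonFree (triangleBlowup n) := by
  intro p q hpq hqp
  rw [triangleBlowup, hpq] at hqp
  revert hqp
  generalize p.1 = i
  revert i
  decide

theorem outDeg_triangleBlowup (p : Fin 3 × Fin n) : outDeg (triangleBlowup n) p = n :=
  (Nat.card_subtype_fst_eq (p.1 + 1)).trans (Nat.card_eq_fintype_card.trans (Fintype.card_fin n))

theorem inDeg_triangleBlowup (p : Fin 3 × Fin n) : inDeg (triangleBlowup n) p = n := by
  have (q : Fin 3 × Fin n) : triangleBlowup n q p ↔ q.1 = p.1 - 1 :=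
    eq_comm.trans eq_sub_iff_add_eq.symm
  rw [inDeg, Nat.card_congr (Equiv.subtypeEquivRight this), Nat.card_subtype_fst_eq,
    Nat.card_eq_fintype_card, Fintype.card_fin]

theorem ceil_tildeDelta_liftRel_triangleBlowup {W : Type*} [Fintype W] {D : W → W → Prop}
    (hD : tildeDelta D ≤ n) : ⌈tildeDelta (Sum.LiftRel D (triangleBlowup n))⌉₊ = n := by
  refine le_antisymm (Nat.ceil_le.2 (tildeDelta_le_iff.2 ?_)) ?_
  · rintro (a | p)
    · simpa [outDeg_liftRel, inDeg_liftRel] using tildeDelta_le_iff.1 hD a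
    · simp [outDeg_liftRel, inDeg_liftRel, outDeg_triangleBlowup, inDeg_triangleBlowup, sq]
  · rcases Nat.eq_zero_or_pos n with rfl | hn
    · exact Nat.zero_le _
    · have := sqrt_le_tildeDelta (Adj := Sum.LiftRel D (triangleBlowup n)) (.inr (0, ⟨0, hn⟩))
      simp only [outDeg_liftRel, inDeg_liftRel, Sum.elim_inr, outDeg_triangleBlowup,
        inDeg_triangleBlowup, Real.sqrt_mul_self (Nat.cast_nonneg n)] at this
      exact_mod_cast this.trans (Nat.le_ceil _)

end TriangleBlowup

def inducedOn {V : Type*} (Adj : V → V → Prop) (S : Set V) (a b : V) : Prop :=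
  a ∈ S ∧ b ∈ S ∧ Adj a b

section InducedOn

variable {V : Type*} {Adj : V → V → Prop} {S : Set V} {k : ℕ}

theorem DigonFree.inducedOn (h : DigonFree Adj) : DigonFree (inducedOn Adj S) :=
  fun u v huv hvu => h u v huv.2.2 hvu.2.2

theorem DiColorable.colorableOn_of_inducedOn (h : DiColorable (inducedOn Adj S) k) :
    ColorableOn Adj S k := by
  obtain ⟨f, hf⟩ := h
  refine ⟨fun v => f v, fun v _ => (f v).isLt, fun i v hv hcyc => hf (f v) v rfl ?_⟩
  have hsub : ∀ {u}, u ∈ {u | u ∈ S ∧ (f u : ℕ) = i} → f u = f v :=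
    fun hu => Fin.ext (hu.2.trans hv.2.symm)
  exact TransGen.mono (fun _ _ h => ⟨hsub h.1, hsub h.2.1, h.1.1, h.2.1.1, h.2.2⟩) _ _ hcyc

variable [Finite V]

theorem outDeg_inducedOn_le (v : V) : outDeg (inducedOn Adj S) v ≤ outDegOn Adj S v :=
  (outDeg_eq_ncard _ v).trans_le (Set.ncard_le_ncard fun _ h => h.2)

theorem inDeg_inducedOn_le (v : V) : inDeg (inducedOn Adj S) v ≤ inDegOn Adj S v :=
  (outDeg_eq_ncard (flip (inducedOn Adj S)) v).trans_le
    (Set.ncard_le_ncard fun _ (h : _ ∧ _ ∧ _) => ⟨h.1, h.2.2⟩)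

theorem outDeg_inducedOn_of_notMem {v : V} (hv : v ∉ S) : outDeg (inducedOn Adj S) v = 0 := by
  rw [outDeg_eq_ncard, Set.ncard_eq_zero]
  exact Set.eq_empty_of_forall_notMem fun _ h => hv h.1

end InducedOn

theorem add_le_add_sq_div_of_mul_le_sq {a b β D : ℝ} (hβ : 0 < β) (ha : β ≤ a)
    (hb : β ≤ b) (hab : a * b ≤ D ^ 2) (hD : 0 ≤ D) : a + b ≤ D + D ^ 2 / β := by
  wlog hle : a ≤ b generalizing a b
  · linarith [this hb ha (by linarith) (le_of_not_ge hle)]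
  have haD : a ≤ D := by nlinarith
  have hbβ : b ≤ D ^ 2 / β := by
    rw [le_div_iff₀ hβ]
    nlinarith
  linarith

theorem add_le_two_mul_of_mul_le_sq {a b β D K : ℝ} (hK : 4 ≤ K) (hD : 0 < D)
    (hβ : (1 - 2 / K) * D ≤ β) (ha : β ≤ a) (hb : β ≤ b) (hab : a * b ≤ D ^ 2) :
    a + b ≤ 2 * (1 + 2 / K) * D := by
  have hK0 : 0 < K := by linarith
  have h2K : 2 / K ≤ 1 / 2 := by rw [div_le_iff₀ hK0]; linarith
  have hβpos : 0 < β := lt_of_lt_of_le (by nlinarith) hβ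
  have hsq : D ^ 2 / β ≤ (1 + 4 / K) * D := by
    rw [div_le_iff₀ hβpos]
    have h8 : 8 / K ^ 2 ≤ 2 / K := by
      rw [div_le_div_iff₀ (by positivity) hK0]
      nlinarith
    have : (1 + 4 / K) * (1 - 2 / K) = 1 + 2 / K - 8 / K ^ 2 := by field_simp; ring
    nlinarith [mul_le_mul_of_nonneg_left hβ (by positivity : 0 ≤ (1 + 4 / K) * D)]
  linarith [add_le_add_sq_div_of_mul_le_sq hβpos ha hb hab hD.le,
    show 2 * (1 + 2 / K) * D = D + (1 + 4 / K) * D by ring]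

theorem div_add_one_mul_sub_one_le {x D : ℝ} (hx : 1 ≤ x) (hD : (2 * x + 1) ^ 2 ≤ D) :
    (2 * (1 + 2 / (2 * x + 1) ^ 2) * D / (2 * x + 1) + 1) * (x - 1) ≤
      (1 - 1 / (2 * x + 1) ^ 2) * D := by
  have hy : 0 < 2 * x + 1 := by linarith
  rw [div_add_one hy.ne', div_mul_eq_mul_div, div_le_iff₀ hy]
  field_simp
  nlinarith [mul_nonneg (sub_nonneg.2 hD) (by nlinarith : (0 : ℝ) ≤ 12 * x ^ 2 + 6 * x + 6),
    sq_nonneg x, mul_nonneg (sub_nonneg.2 hx) (sq_nonneg x)]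

def DichromBoundAt (n : ℕ) : Prop :=
  ∀ (V : Type) [Fintype V] (Adj : V → V → Prop),
    DigonFree Adj → ⌈tildeDelta Adj⌉₊ = n → dichromNum Adj ≤ n - 1

namespace DichromBoundAt

variable {n : ℕ} {V : Type} [Fintype V] {Adj : V → V → Prop}

/-- Adding a disjoint blown-up triangle raises `⌈Δ̃⌉` to exactly `n`. -/
theorem dichromNum_le_of_tildeDelta_le (h : DichromBoundAt n) {W : Type} [Fintype W]
    {D : W → W → Prop} (hD : DigonFree D) (hΔ : tildeDelta D ≤ n) : dichromNum D ≤ n - 1 :=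
  have hE := hD.liftRel (digonFree_triangleBlowup (n := n))
  (dichromNum_le_of_hom hE.irrefl Sum.inl fun _ _ hab => .inl hab).trans
    (h _ _ hE (ceil_tildeDelta_liftRel_triangleBlowup hΔ))

theorem colorableOn (h : DichromBoundAt n) (hD : DigonFree Adj) (S : Set V)
    (hS : ∀ v ∈ S, outDegOn Adj S v * inDegOn Adj S v ≤ n ^ 2) :
    ColorableOn Adj S (n - 1) := by
  have hΔ : tildeDelta (inducedOn Adj S) ≤ n := by
    refine tildeDelta_le_iff.2 fun v => ?_
    by_cases hv : v ∈ S
    · exact (Nat.mul_le_mul (outDeg_inducedOn_le v) (inDeg_inducedOn_le v)).trans (hS v hv)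
    · simp [outDeg_inducedOn_of_notMem hv]
  exact (diColorable_dichromNum hD.inducedOn.irrefl).colorableOn_of_inducedOn.mono
    (h.dichromNum_le_of_tildeDelta_le hD.inducedOn hΔ)

theorem one_le (h : DichromBoundAt n) : 1 ≤ n := by
  by_contra! hn
  obtain ⟨f, hf, -⟩ := h.colorableOn (Adj := fun _ _ : Unit => False) (fun _ _ h => h.elim)
    Set.univ (by simp [outDegOn])
  exact absurd (hf () trivial) (by omega)

theorem colorableOn_of_le (h : DichromBoundAt n) (hD : DigonFree Adj) {m : ℕ} (hnm : n ≤ m)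
    (S : Set V) (hS : ∀ v ∈ S, outDegOn Adj S v * inDegOn Adj S v ≤ m ^ 2) :
    ColorableOn Adj S (m - 1) := by
  induction m, hnm using Nat.le_induction generalizing S with
  | base => exact h.colorableOn hD S hS
  | succ m hnm ih =>
    simpa [Nat.sub_add_cancel (h.one_le.trans hnm)] using
      colorableOn_succ_of_forall hD.irrefl ih S hS

theorem colorableOn_of_degOn_lt (h : DichromBoundAt n) (hD : DigonFree Adj) {k : ℕ}
    (hk : 0 < k) (S : Set V)
    (hS : ∀ v ∈ S, outDegOn Adj S v + inDegOn Adj S v < k * (2 * n + 1)) :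
    ColorableOn Adj S (k * (n - 1)) := by
  obtain ⟨g, hg⟩ := exists_partition_degOn_le hD.irrefl hk hS
  have hparts : ∀ c ∈ (univ : Finset (Fin k)),
      ColorableOn Adj (S ∩ {u | g u = c}) (n - 1) := by
    refine fun c _ => h.colorableOn hD _ fun v hv => ?_
    have hsum := hg v hv.1
    rw [hv.2] at hsum
    nlinarith [two_mul_le_add_sq (outDegOn Adj (S ∩ {u | g u = c}) v)
      (inDegOn Adj (S ∩ {u | g u = c}) v)]
  simpa using (ColorableOn.biUnion _ hparts).subset fun v hv =>
    Set.mem_biUnion (mem_univ (g v)) ⟨hv, rfl⟩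

theorem colorableOn_univ_max (h : DichromBoundAt n) (hD : DigonFree Adj) {β k : ℕ}
    (hk : 0 < k) (hdeg : ∀ a b : ℕ, β ≤ a → β ≤ b → a * b ≤ ⌈tildeDelta Adj⌉₊ ^ 2 →
      a + b < k * (2 * n + 1)) :
    ColorableOn Adj Set.univ (max β (k * (n - 1))) :=
  colorableOn_max_of_forall_minDeg hD.irrefl _ fun T _ hT =>
    h.colorableOn_of_degOn_lt hD hk T fun v hv =>
      hdeg _ _ (hT v hv).1 (hT v hv).2 (outDegOn_mul_inDegOn_le_ceil_tildeDelta_sq T v)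

theorem dichromNum_le_sub_one (h : DichromBoundAt n) (hD : DigonFree Adj)
    (hge : n ≤ ⌈tildeDelta Adj⌉₊) : dichromNum Adj ≤ ⌈tildeDelta Adj⌉₊ - 1 :=
  dichromNum_le_of_colorableOn <| h.colorableOn_of_le hD hge Set.univ fun v _ =>
    outDegOn_mul_inDegOn_le_ceil_tildeDelta_sq _ v

/-- The core is cut at `β = ⌊(1 - 1/K) Δ⌋` and split into `k = ⌊M / (2n + 1)⌋ + 1` parts, where
`M = 2 (1 + 2/K) Δ` bounds the degree sums in the core. -/
theorem dichromNum_le_of_lt (h : DichromBoundAt n) (hD : DigonFree Adj)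
    (hlarge : ((2 * n + 1) ^ 2 : ℝ) < ⌈tildeDelta Adj⌉₊) :
    (dichromNum Adj : ℝ) ≤ (1 - 1 / (2 * n + 1) ^ 2) * ⌈tildeDelta Adj⌉₊ := by
  set Δ := ⌈tildeDelta Adj⌉₊
  set K : ℝ := (2 * n + 1) ^ 2
  set β := ⌊(1 - 1 / K) * Δ⌋₊
  set M : ℝ := 2 * (1 + 2 / K) * Δ
  set k := ⌊M / (2 * n + 1)⌋₊ + 1
  have hn : (1 : ℝ) ≤ n := by exact_mod_cast h.one_le
  have hK9 : 9 ≤ K := by nlinarith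
  have hΔpos : (0 : ℝ) < Δ := by linarith
  have hα : 0 ≤ 1 - 1 / K := by
    linarith [one_div_le_one_div_of_le (by norm_num) hK9]
  have hβ : (1 - 2 / K) * Δ ≤ β := by
    have hΔK : 1 ≤ Δ / K := by rw [le_div_iff₀ (by linarith)]; linarith
    linarith [Nat.lt_floor_add_one ((1 - 1 / K) * Δ),
      show (1 - 2 / K) * Δ = (1 - 1 / K) * Δ - Δ / K by ring]
  have hk : (k : ℝ) = ⌊M / (2 * n + 1)⌋₊ + 1 := by push_cast [k]; ring
  have hcol := h.colorableOn_univ_max hD (β := β) (show 0 < k from Nat.succ_pos _)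
    fun a b ha hb hab => by
      have hsum : (a + b : ℝ) ≤ M := add_le_two_mul_of_mul_le_sq (by linarith) hΔpos hβ
        (by exact_mod_cast ha) (by exact_mod_cast hb) (by exact_mod_cast hab)
      have hMk : M < k * (2 * n + 1) := by
        rw [← div_lt_iff₀ (by positivity), hk]
        exact Nat.lt_floor_add_one _
      exact_mod_cast hsum.trans_lt hMk
  have hkM : (k : ℝ) ≤ M / (2 * n + 1) + 1 := by
    rw [hk]
    linarith [Nat.floor_le (by positivity : 0 ≤ M / (2 * n + 1))]
  calc (dichromNum Adj : ℝ) ≤ max (β : ℝ) ((k * (n - 1) : ℕ) : ℝ) := by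
        exact_mod_cast dichromNum_le_of_colorableOn hcol
    _ ≤ (1 - 1 / K) * Δ := by
      refine max_le (Nat.floor_le (mul_nonneg hα hΔpos.le)) ?_
      push_cast [h.one_le]
      calc (k : ℝ) * (n - 1) ≤ (M / (2 * n + 1) + 1) * (n - 1) := by gcongr
        _ ≤ (1 - 1 / K) * Δ := div_add_one_mul_sub_one_le hn hlarge.le

theorem dichromNum_le_mul_ceil (h : DichromBoundAt n) (hD : DigonFree Adj)
    (hge : n ≤ ⌈tildeDelta Adj⌉₊) :
    (dichromNum Adj : ℝ) ≤ (1 - 1 / (2 * n + 1) ^ 2) * ⌈tildeDelta Adj⌉₊ := by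
  rcases le_or_gt (⌈tildeDelta Adj⌉₊ : ℝ) ((2 * n + 1) ^ 2) with hsmall | hlarge
  · have hchrom : (dichromNum Adj : ℝ) ≤ ⌈tildeDelta Adj⌉₊ - 1 := by
      calc (dichromNum Adj : ℝ) ≤ (⌈tildeDelta Adj⌉₊ - 1 : ℕ) := by
            exact_mod_cast h.dichromNum_le_sub_one hD hge
        _ = ⌈tildeDelta Adj⌉₊ - 1 := by push_cast [h.one_le.trans hge]; ring
    have : (⌈tildeDelta Adj⌉₊ : ℝ) / (2 * n + 1) ^ 2 ≤ 1 :=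
      div_le_one_of_le₀ hsmall (by positivity)
    linarith [show (1 - 1 / (2 * n + 1) ^ 2) * (⌈tildeDelta Adj⌉₊ : ℝ) =
      ⌈tildeDelta Adj⌉₊ - ⌈tildeDelta Adj⌉₊ / (2 * n + 1) ^ 2 by ring]
  · exact h.dichromNum_le_of_lt hD hlarge

end DichromBoundAt

/-- **Corollary.** Suppose `Δ₀` is an integer such that every digon-free digraph `D` with
`⌈Δ̃(D)⌉ = Δ₀` satisfies `χ(D) ≤ Δ₀ - 1`.  Then there exists a positive constant `α < 1`
such that every digon-free digraph `D` with `⌈Δ̃(D)⌉ ≥ Δ₀` satisfies `χ(D) ≤ α ⌈Δ̃(D)⌉`. -/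
theorem stmt_10 (Δ₀ : ℕ)
    (h : ∀ (V : Type) [Fintype V] (Adj : V → V → Prop),
      DigonFree Adj → ⌈tildeDelta Adj⌉₊ = Δ₀ → dichromNum Adj ≤ Δ₀ - 1) :
    ∃ α : ℝ, 0 < α ∧ α < 1 ∧
      ∀ (V : Type) [Fintype V] (Adj : V → V → Prop),
        DigonFree Adj → Δ₀ ≤ ⌈tildeDelta Adj⌉₊ →
        (dichromNum Adj : ℝ) ≤ α * ⌈tildeDelta Adj⌉₊ := by
  have hK : (1 : ℝ) < (2 * Δ₀ + 1) ^ 2 := by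
    have : (1 : ℝ) ≤ Δ₀ := by exact_mod_cast DichromBoundAt.one_le h
    nlinarith
  refine ⟨1 - 1 / (2 * Δ₀ + 1) ^ 2, sub_pos.2 ((div_lt_one (by positivity)).2 hK),
    sub_lt_self _ (by positivity), fun V _ Adj hD hge => ?_⟩
  exact DichromBoundAt.dichromNum_le_mul_ceil h hD hge
end
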